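/- arXiv:1208.4974 — 5 statements merged into one kernel-verified Lean document; each statement's English description precedes it below -/
import Mathlib

section
/- Let E be a countable set, let P and P̃ be irreducible stochastic matrices on E, and let π and ν be invariant probability vectors for P and P̃ respectively. If for some integer m ≥ 1 the ergodicity coefficient satisfies Λ₁(P^m) < 1, then ‖ν − π‖ ≤ ‖P^m − P̃^m‖ / (1 − Λ₁(P^m)). -/
open scoped Classical ENNReal NNReal
open Filter MeasureTheory

noncomputable section

variable {E : Type*}

def matPow (P : E → E → ℝ) : ℕ → E → E → ℝ
  | 0 => fun i j => if i = j then (1 : ℝ) else 0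
  | n + 1 => fun i j => ∑' k, matPow P n i k * P k j

def IsStochastic (P : E → E → ℝ) : Prop :=
  (∀ i j, 0 ≤ P i j) ∧ ∀ i, ∑' j, P i j = 1

def IsIrred (P : E → E → ℝ) : Prop :=
  ∀ i j, ∃ n, 1 ≤ n ∧ 0 < matPow P n i j

def IsProbVec (π : E → ℝ) : Prop :=
  (∀ i, 0 ≤ π i) ∧ ∑' i, π i = 1

def InvariantFor (π : E → ℝ) (P : E → E → ℝ) : Prop :=
  ∀ j, HasSum (fun i => π i * P i j) (π j)

def vecNorm (μ : E → ℝ) : ℝ := ∑' i, |μ i|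

def rowSumNorm (L : E → E → ℝ) : ℝ := ⨆ i, ∑' j, |L i j|

def ergCoeff (B : E → E → ℝ) : ℝ :=
  (1 / 2) * ⨆ p : E × E, ∑' k, |B p.1 k - B p.2 k|

def IsIntensity (Q : E → E → ℝ) : Prop :=
  (∀ i j, i ≠ j → 0 ≤ Q i j) ∧ ∀ i, HasSum (Q i) 0

def UnifBdd (Q : E → E → ℝ) : Prop := ∃ M : ℝ, ∀ i, -Q i i ≤ M

def QIrred (Q : E → E → ℝ) : Prop :=
  ∀ i j, i ≠ j → ∃ (r : ℕ) (k : ℕ → E), 1 ≤ r ∧ k 0 = i ∧ k r = j ∧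
    ∀ s < r, 0 < Q (k s) (k (s + 1))

def QInvariant (π : E → ℝ) (Q : E → E → ℝ) : Prop :=
  ∀ j, HasSum (fun i => π i * Q i j) 0

def transP (Q : E → E → ℝ) (t : ℝ) : E → E → ℝ :=
  fun i j => ∑' n : ℕ, t ^ n / (Nat.factorial n : ℝ) * matPow Q n i j

def qErgCoeff (Q : E → E → ℝ) : ℝ :=
  (1 / 2) * ⨅ p : {p : E × E // p.1 ≠ p.2},
    (|Q p.val.1 p.val.1 - Q p.val.2 p.val.1| + |Q p.val.1 p.val.2 - Q p.val.2 p.val.2|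
      - ∑' s : E, if s ≠ p.val.1 ∧ s ≠ p.val.2 then |Q p.val.1 s - Q p.val.2 s| else 0)

def vVecNorm (V : E → ℝ) (μ : E → ℝ) : ℝ≥0∞ := ∑' i, ENNReal.ofReal (|μ i| * V i)

def vMatNorm (V : E → ℝ) (L : E → E → ℝ) : ℝ≥0∞ :=
  ⨆ i, (∑' j, ENNReal.ofReal (|L i j| * V j)) / ENNReal.ofReal (V i)

def vOneNorm (V : E → ℝ) : ℝ≥0∞ := ⨆ i, 1 / ENNReal.ofReal (V i)

section Aux

lemma summable_of_nonneg_tsum_ne {f : E → ℝ} (h : ∑' i, f i ≠ 0) :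
    Summable f := by
  by_contra hs
  exact h (tsum_eq_zero_of_not_summable hs)

lemma stoch_row_summable {P : E → E → ℝ} (hP : IsStochastic P) (i : E) : Summable (P i) :=
  summable_of_nonneg_tsum_ne (by rw [hP.2 i]; norm_num)

lemma stoch_entry_le_one {P : E → E → ℝ} (hP : IsStochastic P) (i j : E) : P i j ≤ 1 := by
  rw [← hP.2 i]
  exact Summable.le_tsum (stoch_row_summable hP i) j (fun k _ => hP.1 i k)

lemma matPow_stoch {P : E → E → ℝ} (hP : IsStochastic P) : ∀ n, IsStochastic (matPow P n)
  | 0 => by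
    constructor
    · intro i j; simp only [matPow]; split <;> norm_num
    · intro i
      rw [show (∑' j, matPow P 0 i j) = matPow P 0 i i from
        tsum_eq_single i (fun b hb => if_neg (fun h => hb h.symm))]
      simp [matPow]
  | n + 1 => by
    have IH := matPow_stoch hP n
    constructor
    · intro i j
      exact tsum_nonneg fun k => mul_nonneg (IH.1 i k) (hP.1 k j)
    · intro i
      have hg : ∀ p : E × E, 0 ≤ matPow P n i p.1 * P p.1 p.2 :=
        fun p => mul_nonneg (IH.1 i p.1) (hP.1 p.1 p.2)
      have hrow : ∀ k, Summable fun j => matPow P n i k * P k j :=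
        fun k => (stoch_row_summable hP k).mul_left _
      have hrowsum : (fun k => ∑' j, matPow P n i k * P k j) = fun k => matPow P n i k := by
        funext k; rw [tsum_mul_left, hP.2 k, mul_one]
      have hsum : Summable (fun p : E × E => matPow P n i p.1 * P p.1 p.2) := by
        rw [summable_prod_of_nonneg hg]
        exact ⟨hrow, by rw [hrowsum]; exact stoch_row_summable IH i⟩
      have hcomm := Summable.tsum_comm (f := fun k j => matPow P n i k * P k j) hsum
      show (∑' j, ∑' k, matPow P n i k * P k j) = 1
      rw [hcomm]
      calc (∑' k, ∑' j, matPow P n i k * P k j) = ∑' k, matPow P n i k :=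
            tsum_congr fun k => by rw [tsum_mul_left, hP.2 k, mul_one]
        _ = 1 := IH.2 i

lemma probvec_summable {pi : E → ℝ} (h : IsProbVec pi) : Summable pi :=
  summable_of_nonneg_tsum_ne (by rw [h.2]; norm_num)

lemma summable_weight_col {pi : E → ℝ} {B : E → E → ℝ} (hpi : Summable pi)
    (hpinn : ∀ i, 0 ≤ pi i) (hB : IsStochastic B) (j : E) :
    Summable fun i => pi i * B i j :=
  Summable.of_nonneg_of_le (fun i => mul_nonneg (hpinn i) (hB.1 i j))
    (fun i => mul_le_of_le_one_right (hpinn i) (stoch_entry_le_one hB i j)) hpi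

lemma invariant_matPow {P : E → E → ℝ} {pi : E → ℝ} (hP : IsStochastic P)
    (hpi : IsProbVec pi) (hinv : InvariantFor pi P) :
    ∀ n j, ∑' i, pi i * matPow P n i j = pi j
  | 0, j => by
    rw [show (∑' i, pi i * matPow P 0 i j) = pi j * matPow P 0 j j from
      tsum_eq_single j (fun b hb => by
        simp only [matPow]; rw [if_neg hb, mul_zero])]
    simp [matPow]
  | n + 1, j => by
    have IH := invariant_matPow hP hpi hinv n
    have hA := matPow_stoch hP n
    set A := matPow P n with hAdef
    have hnn : ∀ p : E × E, 0 ≤ pi p.1 * (A p.1 p.2 * P p.2 j) :=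
      fun p => mul_nonneg (hpi.1 p.1) (mul_nonneg (hA.1 p.1 p.2) (hP.1 p.2 j))
    have hcolsum : ∀ i, Summable fun k => A i k * P k j :=
      fun i => Summable.of_nonneg_of_le (fun k => mul_nonneg (hA.1 i k) (hP.1 k j))
        (fun k => mul_le_of_le_one_right (hA.1 i k) (stoch_entry_le_one hP k j))
        (stoch_row_summable hA i)
    have hrows : ∀ i, Summable fun k => pi i * (A i k * P k j) :=
      fun i => (hcolsum i).mul_left _
    have hrowsumle : ∀ i, (∑' k, pi i * (A i k * P k j)) ≤ pi i := by
      intro i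
      rw [tsum_mul_left]
      refine mul_le_of_le_one_right (hpi.1 i) ?_
      calc (∑' k, A i k * P k j) ≤ ∑' k, A i k :=
            Summable.tsum_le_tsum (fun k => mul_le_of_le_one_right (hA.1 i k) (stoch_entry_le_one hP k j))
              (hcolsum i) (stoch_row_summable hA i)
        _ = 1 := hA.2 i
    have hsum : Summable (fun p : E × E => pi p.1 * (A p.1 p.2 * P p.2 j)) := by
      rw [summable_prod_of_nonneg hnn]
      refine ⟨hrows, ?_⟩
      exact Summable.of_nonneg_of_le
        (fun i => tsum_nonneg fun k => hnn (i, k)) hrowsumle (probvec_summable hpi)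
    have hcomm := Summable.tsum_comm (f := fun i k => pi i * (A i k * P k j)) hsum
    calc (∑' i, pi i * matPow P (n+1) i j) = ∑' i, ∑' k, pi i * (A i k * P k j) := by
          refine tsum_congr fun i => ?_
          show pi i * (∑' k, A i k * P k j) = _
          rw [tsum_mul_left]
      _ = ∑' k, ∑' i, pi i * (A i k * P k j) := hcomm.symm
      _ = ∑' k, pi k * P k j := by
          refine tsum_congr fun k => ?_
          calc (∑' i, pi i * (A i k * P k j)) = ∑' i, (pi i * A i k) * (P k j) :=
                tsum_congr fun i => by ring
            _ = (∑' i, pi i * A i k) * P k j := tsum_mul_right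
            _ = pi k * P k j := by rw [IH k]
      _ = pi j := (hinv j).tsum_eq

lemma rowdiff_summable {A At : E → E → ℝ} (hA : IsStochastic A) (hAt : IsStochastic At)
    (i i' : E) : Summable fun k => |A i k - At i' k| :=
  ((stoch_row_summable hA i).sub (stoch_row_summable hAt i')).abs

lemma rowdiff_le_two {A At : E → E → ℝ} (hA : IsStochastic A) (hAt : IsStochastic At)
    (i i' : E) : (∑' k, |A i k - At i' k|) ≤ 2 := by
  calc (∑' k, |A i k - At i' k|) ≤ ∑' k, (A i k + At i' k) :=
        Summable.tsum_le_tsum (fun k => (abs_sub _ _).trans (by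
          rw [abs_of_nonneg (hA.1 i k), abs_of_nonneg (hAt.1 i' k)]))
          (rowdiff_summable hA hAt i i')
          ((stoch_row_summable hA i).add (stoch_row_summable hAt i'))
    _ = 2 := by
        rw [Summable.tsum_add (stoch_row_summable hA i) (stoch_row_summable hAt i'), hA.2 i, hAt.2 i']
        norm_num

lemma ergCoeff_bound {B : E → E → ℝ} (hB : IsStochastic B) (i i' : E) :
    (∑' j, |B i j - B i' j|) ≤ 2 * ergCoeff B := by
  have hbdd : BddAbove (Set.range fun p : E × E => ∑' k, |B p.1 k - B p.2 k|) := by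
    refine ⟨2, ?_⟩
    rintro x ⟨p, rfl⟩
    exact rowdiff_le_two hB hB p.1 p.2
  have h := le_ciSup hbdd (i, i')
  have h2 : 2 * ergCoeff B = ⨆ p : E × E, ∑' k, |B p.1 k - B p.2 k| := by
    rw [ergCoeff]; ring
  rw [h2]
  exact h

lemma contraction {B : E → E → ℝ} (hB : IsStochastic B) {μ : E → ℝ} (hs : Summable μ)
    (h0 : ∑' i, μ i = 0) :
    (∑' j, |∑' i, μ i * B i j|) ≤ ergCoeff B * ∑' i, |μ i| := by
  set μp : E → ℝ := fun i => max (μ i) 0 with hμpdef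
  set μm : E → ℝ := fun i => max (-μ i) 0 with hμmdef
  have hμpnn : ∀ i, 0 ≤ μp i := fun i => le_max_right _ _
  have hμmnn : ∀ i, 0 ≤ μm i := fun i => le_max_right _ _
  have hpm : ∀ i, μ i = μp i - μm i := fun i => by
    simp only [hμpdef, hμmdef]
    rcases le_total (μ i) 0 with h | h
    · rw [max_eq_right h, max_eq_left (by linarith)]; ring
    · rw [max_eq_left h, max_eq_right (by linarith)]; ring
  have habs : ∀ i, |μ i| = μp i + μm i := fun i => by
    simp only [hμpdef, hμmdef]
    rcases le_total (μ i) 0 with h | h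
    · rw [max_eq_right h, max_eq_left (by linarith), abs_of_nonpos h]; ring
    · rw [max_eq_left h, max_eq_right (by linarith), abs_of_nonneg h]; ring
  have hμple : ∀ i, μp i ≤ |μ i| := fun i => by rw [habs i]; linarith [hμmnn i]
  have hμmle : ∀ i, μm i ≤ |μ i| := fun i => by rw [habs i]; linarith [hμpnn i]
  have hsabs : Summable fun i => |μ i| := hs.abs
  have hsp : Summable μp := Summable.of_nonneg_of_le hμpnn hμple hsabs
  have hsm : Summable μm := Summable.of_nonneg_of_le hμmnn hμmle hsabs
  set c : ℝ := ∑' i, μp i with hcdef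
  have hcm : (∑' i, μm i) = c := by
    have h1 : (∑' i, (μp i - μm i)) = (∑' i, μp i) - ∑' i, μm i := Summable.tsum_sub hsp hsm
    have h2 : (∑' i, (μp i - μm i)) = 0 := by
      rw [show (fun i => μp i - μm i) = μ from funext fun i => (hpm i).symm]; exact h0
    rw [h2] at h1; linarith
  have hcnn : 0 ≤ c := tsum_nonneg hμpnn
  have habs_sum : (∑' i, |μ i|) = 2 * c := by
    calc (∑' i, |μ i|) = ∑' i, (μp i + μm i) := tsum_congr habs
      _ = (∑' i, μp i) + ∑' i, μm i := Summable.tsum_add hsp hsm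
      _ = 2 * c := by rw [hcm]; ring
  rcases eq_or_lt_of_le hcnn with hc0 | hcpos
  · have hz : ∀ i, μ i = 0 := by
      intro i
      have hp0 : μp i = 0 := le_antisymm (by
        have := Summable.le_tsum hsp i (fun j _ => hμpnn j); rw [← hcdef, ← hc0] at this; exact this)
        (hμpnn i)
      have hm0 : μm i = 0 := le_antisymm (by
        have := Summable.le_tsum hsm i (fun j _ => hμmnn j); rw [hcm, ← hc0] at this; exact this)
        (hμmnn i)
      rw [hpm i, hp0, hm0]; ring
    have hzz : ∀ j, (∑' i, μ i * B i j) = 0 := fun j => by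
      simp [funext hz]
    simp [hzz, funext hz]
  · have hGsum : Summable (fun p : E × E => μp p.1 * μm p.2) :=
      hsp.mul_of_nonneg hsm hμpnn hμmnn
    have hGnn : ∀ p : E × E, (0:ℝ) ≤ μp p.1 * μm p.2 :=
      fun p => mul_nonneg (hμpnn p.1) (hμmnn p.2)
    have hdiffbd : ∀ i i' j, |B i j - B i' j| ≤ 1 := by
      intro i i' j
      rw [abs_le]
      constructor
      · have := hB.1 i j; have := stoch_entry_le_one hB i' j; linarith
      · have := stoch_entry_le_one hB i j; have := hB.1 i' j; linarith
    have hFsum : ∀ j, Summable (fun p : E × E => μp p.1 * μm p.2 * (B p.1 j - B p.2 j)) := by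
      intro j
      rw [← summable_abs_iff]
      refine Summable.of_nonneg_of_le (fun p => abs_nonneg _) (fun p => ?_) hGsum
      rw [abs_mul, abs_of_nonneg (hGnn p)]
      exact mul_le_of_le_one_right (hGnn p) (hdiffbd p.1 p.2 j)
    have hμpB : ∀ j, Summable fun i => μp i * B i j := fun j =>
      Summable.of_nonneg_of_le (fun i => mul_nonneg (hμpnn i) (hB.1 i j))
        (fun i => mul_le_of_le_one_right (hμpnn i) (stoch_entry_le_one hB i j)) hsp
    have hμmB : ∀ j, Summable fun i => μm i * B i j := fun j =>
      Summable.of_nonneg_of_le (fun i => mul_nonneg (hμmnn i) (hB.1 i j))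
        (fun i => mul_le_of_le_one_right (hμmnn i) (stoch_entry_le_one hB i j)) hsm
    have hkey : ∀ j, c * (∑' i, μ i * B i j) =
        ∑' p : E × E, μp p.1 * μm p.2 * (B p.1 j - B p.2 j) := by
      intro j
      set s : ℝ := ∑' i', μm i' * B i' j with hsdef
      have hinner : ∀ i, (∑' i', μp i * μm i' * (B i j - B i' j))
          = μp i * (c * B i j - s) := by
        intro i
        have h1 : ∀ i', μp i * μm i' * (B i j - B i' j)
            = μp i * (μm i' * B i j - μm i' * B i' j) := fun i' => by ring
        rw [tsum_congr h1, tsum_mul_left]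
        congr 1
        rw [Summable.tsum_sub ((hsm.mul_right (B i j))) (hμmB j)]
        congr 1
        rw [tsum_mul_right, hcm]
      calc c * (∑' i, μ i * B i j) = c * ((∑' i, μp i * B i j) - s) := by
            congr 1
            rw [show (fun i => μ i * B i j) = fun i => μp i * B i j - μm i * B i j from
              funext fun i => by rw [hpm i]; ring]
            exact Summable.tsum_sub (hμpB j) (hμmB j)
        _ = ∑' i, μp i * (c * B i j - s) := by
            rw [show (fun i => μp i * (c * B i j - s))
                = fun i => c * (μp i * B i j) - s * μp i from funext fun i => by ring]
            rw [Summable.tsum_sub ((hμpB j).mul_left c) (hsp.mul_left s), tsum_mul_left, tsum_mul_left]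
            rw [← hcdef]
            ring
        _ = ∑' i, ∑' i', μp i * μm i' * (B i j - B i' j) := (tsum_congr hinner).symm
        _ = ∑' p : E × E, μp p.1 * μm p.2 * (B p.1 j - B p.2 j) :=
            (Summable.tsum_prod (hFsum j)).symm
    set H : E → ℝ := fun j => ∑' p : E × E, μp p.1 * μm p.2 * |B p.1 j - B p.2 j| with hHdef
    have hKnn : ∀ q : (E × E) × E, (0:ℝ) ≤ μp q.1.1 * μm q.1.2 * |B q.1.1 q.2 - B q.1.2 q.2| :=
      fun q => mul_nonneg (hGnn q.1) (abs_nonneg _)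
    have hKrows : ∀ p : E × E, Summable fun j => μp p.1 * μm p.2 * |B p.1 j - B p.2 j| :=
      fun p => (rowdiff_summable hB hB p.1 p.2).mul_left _
    have hKrowsums : Summable fun p : E × E => ∑' j, μp p.1 * μm p.2 * |B p.1 j - B p.2 j| := by
      refine Summable.of_nonneg_of_le (fun p => tsum_nonneg fun j => hKnn (p, j))
        (fun p => ?_) (hGsum.mul_right 2)
      rw [tsum_mul_left]
      rcases le_or_gt (μp p.1 * μm p.2) 0 with h | h
      · have h' : μp p.1 * μm p.2 = 0 := le_antisymm h (hGnn p)
        rw [h']; simp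
      · exact mul_le_mul_of_nonneg_left (rowdiff_le_two hB hB p.1 p.2) (le_of_lt h)
    have hKsum : Summable (fun q : (E × E) × E =>
        μp q.1.1 * μm q.1.2 * |B q.1.1 q.2 - B q.1.2 q.2|) := by
      rw [summable_prod_of_nonneg hKnn]
      exact ⟨fun p => hKrows p, hKrowsums⟩
    have hHsummable : Summable H := by
      have := hKsum.prod_symm.prod
      exact this.congr fun j => rfl
    have hstep1 : ∀ j, |c * (∑' i, μ i * B i j)| ≤ H j := by
      intro j
      rw [hkey j]
      calc |∑' p : E × E, μp p.1 * μm p.2 * (B p.1 j - B p.2 j)|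
          ≤ ∑' p : E × E, |μp p.1 * μm p.2 * (B p.1 j - B p.2 j)| := by
            have := norm_tsum_le_tsum_norm (f := fun p : E × E =>
              μp p.1 * μm p.2 * (B p.1 j - B p.2 j)) ?_
            · simpa only [Real.norm_eq_abs] using this
            · simp only [Real.norm_eq_abs]
              exact (summable_abs_iff.mpr (hFsum j))
        _ = H j := by
            refine tsum_congr fun p => ?_
            rw [abs_mul, abs_of_nonneg (hGnn p)]
    have hsumH : (∑' j, H j) ≤ c * (ergCoeff B * (2 * c)) := by
      have hcomm := Summable.tsum_comm (f := fun (p : E × E) (j : E) =>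
        μp p.1 * μm p.2 * |B p.1 j - B p.2 j|) hKsum
      calc (∑' j, H j) = ∑' p : E × E, ∑' j, μp p.1 * μm p.2 * |B p.1 j - B p.2 j| := hcomm
        _ ≤ ∑' p : E × E, μp p.1 * μm p.2 * (2 * ergCoeff B) := by
            refine Summable.tsum_le_tsum (fun p => ?_) hKrowsums (hGsum.mul_right _)
            rw [tsum_mul_left]
            exact mul_le_mul_of_nonneg_left (ergCoeff_bound hB p.1 p.2) (hGnn p)
        _ = (∑' p : E × E, μp p.1 * μm p.2) * (2 * ergCoeff B) := tsum_mul_right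
        _ = c * (ergCoeff B * (2 * c)) := by
            have hcc : (∑' p : E × E, μp p.1 * μm p.2) = c * c := by
              rw [Summable.tsum_prod hGsum]
              calc (∑' i, ∑' i', μp i * μm i') = ∑' i, μp i * c :=
                    tsum_congr fun i => by rw [tsum_mul_left, hcm]
                _ = c * c := by rw [tsum_mul_right]
            rw [hcc]; ring
    have hfinal : c * (∑' j, |∑' i, μ i * B i j|) ≤ c * (ergCoeff B * (2 * c)) := by
      calc c * (∑' j, |∑' i, μ i * B i j|) = ∑' j, |c * (∑' i, μ i * B i j)| := by
            rw [← tsum_mul_left]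
            refine tsum_congr fun j => ?_
            rw [abs_mul, abs_of_pos hcpos]
        _ ≤ ∑' j, H j :=
            Summable.tsum_le_tsum hstep1
              (Summable.of_nonneg_of_le (fun j => abs_nonneg _) hstep1 hHsummable)
              hHsummable
        _ ≤ c * (ergCoeff B * (2 * c)) := hsumH
    have hres := le_of_mul_le_mul_left hfinal hcpos
    rw [habs_sum]
    exact hres

end Aux

/-- If Λ₁(P^m) < 1 then ‖ν − π‖ ≤ ‖P^m − P̃^m‖ / (1 − Λ₁(P^m)). -/
theorem stmt0 {E : Type*} [Countable E] (P Pt : E → E → ℝ) (pi nu : E → ℝ) (m : ℕ)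
    (hP : IsStochastic P) (hPt : IsStochastic Pt)
    (hPirr : IsIrred P) (hPtirr : IsIrred Pt)
    (hpi : IsProbVec pi) (hnu : IsProbVec nu)
    (hpiinv : InvariantFor pi P) (hnuinv : InvariantFor nu Pt)
    (hm : 1 ≤ m) (herg : ergCoeff (matPow P m) < 1) :
    vecNorm (fun i => nu i - pi i) ≤
      rowSumNorm (fun i j => matPow P m i j - matPow Pt m i j) /
        (1 - ergCoeff (matPow P m)) := by
  have hA : IsStochastic (matPow P m) := matPow_stoch hP m
  have hAt : IsStochastic (matPow Pt m) := matPow_stoch hPt m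
  set A : E → E → ℝ := matPow P m with hAdef
  set At : E → E → ℝ := matPow Pt m with hAtdef
  set μ : E → ℝ := fun i => nu i - pi i with hμdef
  set D : E → E → ℝ := fun i j => A i j - At i j with hDdef
  have hnus : Summable nu := probvec_summable hnu
  have hpis : Summable pi := probvec_summable hpi
  have hμs : Summable μ := hnus.sub hpis
  have hμ0 : (∑' i, μ i) = 0 := by
    rw [show μ = fun i => nu i - pi i from rfl, Summable.tsum_sub hnus hpis, hnu.2, hpi.2]; ring
  have hμabs : Summable fun i => |μ i| := hμs.abs
  have hnuAt : ∀ j, Summable fun i => nu i * At i j :=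
    fun j => summable_weight_col hnus hnu.1 hAt j
  have hnuA : ∀ j, Summable fun i => nu i * A i j :=
    fun j => summable_weight_col hnus hnu.1 hA j
  have hpiA : ∀ j, Summable fun i => pi i * A i j :=
    fun j => summable_weight_col hpis hpi.1 hA j
  have hμA : ∀ j, Summable fun i => μ i * A i j := by
    intro j
    rw [← summable_abs_iff]
    refine Summable.of_nonneg_of_le (fun i => abs_nonneg _) (fun i => ?_) hμabs
    rw [abs_mul]
    exact mul_le_of_le_one_right (abs_nonneg _)
      (by rw [abs_of_nonneg (hA.1 i j)]; exact stoch_entry_le_one hA i j)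
  have hnuD : ∀ j, Summable fun i => nu i * D i j := by
    intro j
    have he : (fun i => nu i * D i j) = fun i => nu i * A i j - nu i * At i j :=
      funext fun i => by simp only [hDdef]; ring
    rw [he]
    exact (hnuA j).sub (hnuAt j)
  -- decomposition
  have hdecomp : ∀ j, μ j = (-(∑' i, nu i * D i j)) + ∑' i, μ i * A i j := by
    intro j
    have h1 : (∑' i, nu i * At i j) = nu j := invariant_matPow hPt hnu hnuinv m j
    have h2 : (∑' i, pi i * A i j) = pi j := invariant_matPow hP hpi hpiinv m j
    have h3 : (∑' i, nu i * D i j) = (∑' i, nu i * A i j) - nu j := by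
      rw [show (fun i => nu i * D i j) = fun i => nu i * A i j - nu i * At i j from
        funext fun i => by simp only [hDdef]; ring]
      rw [Summable.tsum_sub (hnuA j) (hnuAt j), h1]
    have h4 : (∑' i, μ i * A i j) = (∑' i, nu i * A i j) - pi j := by
      rw [show (fun i => μ i * A i j) = fun i => nu i * A i j - pi i * A i j from
        funext fun i => by simp only [hμdef]; ring]
      rw [Summable.tsum_sub (hnuA j) (hpiA j), h2]
    rw [h3, h4]
    show nu j - pi j = _
    ring
  -- product summabilities
  have hK1nn : ∀ q : E × E, (0:ℝ) ≤ nu q.1 * |D q.1 q.2| :=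
    fun q => mul_nonneg (hnu.1 q.1) (abs_nonneg _)
  have hK1rows : ∀ i, Summable fun j => nu i * |D i j| :=
    fun i => (rowdiff_summable hA hAt i i).mul_left _
  have hK1rowsums : Summable fun i => ∑' j, nu i * |D i j| := by
    refine Summable.of_nonneg_of_le (fun i => tsum_nonneg fun j => hK1nn (i, j))
      (fun i => ?_) (hnus.mul_right 2)
    rw [tsum_mul_left]
    rcases le_or_gt (nu i) 0 with h | h
    · have h' : nu i = 0 := le_antisymm h (hnu.1 i)
      rw [h']; simp
    · exact mul_le_mul_of_nonneg_left (rowdiff_le_two hA hAt i i) (le_of_lt h)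
  have hK1sum : Summable (fun q : E × E => nu q.1 * |D q.1 q.2|) := by
    rw [summable_prod_of_nonneg hK1nn]
    exact ⟨hK1rows, hK1rowsums⟩
  set g1 : E → ℝ := fun j => ∑' i, nu i * |D i j| with hg1def
  have hg1sum : Summable g1 := (hK1sum.prod_symm.prod).congr fun j => rfl
  have hK2nn : ∀ q : E × E, (0:ℝ) ≤ |μ q.1| * A q.1 q.2 :=
    fun q => mul_nonneg (abs_nonneg _) (hA.1 q.1 q.2)
  have hK2rows : ∀ i, Summable fun j => |μ i| * A i j :=
    fun i => (stoch_row_summable hA i).mul_left _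
  have hK2rowsums : Summable fun i => ∑' j, |μ i| * A i j := by
    refine hμabs.congr fun i => ?_
    rw [tsum_mul_left, hA.2 i, mul_one]
  have hK2sum : Summable (fun q : E × E => |μ q.1| * A q.1 q.2) := by
    rw [summable_prod_of_nonneg hK2nn]
    exact ⟨hK2rows, hK2rowsums⟩
  set g2 : E → ℝ := fun j => ∑' i, |μ i| * A i j with hg2def
  have hg2sum : Summable g2 := (hK2sum.prod_symm.prod).congr fun j => rfl
  -- pointwise bounds
  have hS1le : ∀ j, |∑' i, nu i * D i j| ≤ g1 j := by
    intro j
    calc |∑' i, nu i * D i j| ≤ ∑' i, |nu i * D i j| := by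
          have := norm_tsum_le_tsum_norm (f := fun i => nu i * D i j) ?_
          · simpa only [Real.norm_eq_abs] using this
          · simp only [Real.norm_eq_abs]
            exact summable_abs_iff.mpr (hnuD j)
      _ = g1 j := tsum_congr fun i => by rw [abs_mul, abs_of_nonneg (hnu.1 i)]
  have hS2le : ∀ j, |∑' i, μ i * A i j| ≤ g2 j := by
    intro j
    calc |∑' i, μ i * A i j| ≤ ∑' i, |μ i * A i j| := by
          have := norm_tsum_le_tsum_norm (f := fun i => μ i * A i j) ?_
          · simpa only [Real.norm_eq_abs] using this
          · simp only [Real.norm_eq_abs]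
            exact summable_abs_iff.mpr (hμA j)
      _ = g2 j := tsum_congr fun i => by rw [abs_mul, abs_of_nonneg (hA.1 i j)]
  have hS1summable : Summable fun j => |∑' i, nu i * D i j| :=
    Summable.of_nonneg_of_le (fun j => abs_nonneg _) hS1le hg1sum
  have hS2summable : Summable fun j => |∑' i, μ i * A i j| :=
    Summable.of_nonneg_of_le (fun j => abs_nonneg _) hS2le hg2sum
  -- T1 bound
  have hrowbdd : BddAbove (Set.range fun i => ∑' j, |D i j|) := by
    refine ⟨2, ?_⟩
    rintro x ⟨i, rfl⟩
    exact rowdiff_le_two hA hAt i i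
  have hrowle : ∀ i, (∑' j, |D i j|) ≤ rowSumNorm D := fun i => le_ciSup hrowbdd i
  have hT1 : (∑' j, |∑' i, nu i * D i j|) ≤ rowSumNorm D := by
    have hcomm := Summable.tsum_comm (f := fun i j => nu i * |D i j|) hK1sum
    calc (∑' j, |∑' i, nu i * D i j|) ≤ ∑' j, g1 j :=
          Summable.tsum_le_tsum hS1le hS1summable hg1sum
      _ = ∑' i, ∑' j, nu i * |D i j| := hcomm
      _ ≤ ∑' i, nu i * rowSumNorm D := by
          refine Summable.tsum_le_tsum (fun i => ?_) hK1rowsums (hnus.mul_right _)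
          rw [tsum_mul_left]
          rcases le_or_gt (nu i) 0 with h | h
          · have h' : nu i = 0 := le_antisymm h (hnu.1 i)
            rw [h']; simp
          · exact mul_le_mul_of_nonneg_left (hrowle i) (le_of_lt h)
      _ = rowSumNorm D := by rw [tsum_mul_right, hnu.2, one_mul]
  -- T2 bound
  have hT2 : (∑' j, |∑' i, μ i * A i j|) ≤ ergCoeff A * ∑' i, |μ i| :=
    contraction hA hμs hμ0
  -- combine
  have hmain : vecNorm μ ≤ rowSumNorm D + ergCoeff A * vecNorm μ := by
    have hsplit : ∀ j, |μ j| ≤ |∑' i, nu i * D i j| + |∑' i, μ i * A i j| := by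
      intro j
      rw [hdecomp j]
      calc |(-(∑' i, nu i * D i j)) + ∑' i, μ i * A i j|
          ≤ |(-(∑' i, nu i * D i j))| + |∑' i, μ i * A i j| := abs_add_le _ _
        _ = _ := by rw [abs_neg]
    calc vecNorm μ ≤ ∑' j, (|∑' i, nu i * D i j| + |∑' i, μ i * A i j|) :=
          Summable.tsum_le_tsum hsplit hμabs (hS1summable.add hS2summable)
      _ = (∑' j, |∑' i, nu i * D i j|) + ∑' j, |∑' i, μ i * A i j| :=
          Summable.tsum_add hS1summable hS2summable
      _ ≤ rowSumNorm D + ergCoeff A * vecNorm μ := add_le_add hT1 hT2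
  have hpos : (0:ℝ) < 1 - ergCoeff A := by
    simp only [hAdef] at herg ⊢
    linarith
  rw [le_div_iff₀ hpos]
  nlinarith [hmain]
end
end

section
/- Let E be a countable set and P a stochastic matrix on E. Suppose the whole state space E is ν_m-small for P, i.e. there are an integer m ≥ 1 and a function ν_m : E → ℝ with ν_m(k) ≥ 0 for all k, ν_m(E) := ∑_k ν_m(k) > 0, and P^m(i,k) ≥ ν_m(k) for all i,k. Then the ergodicity coefficient satisfies Λ₁(P^m) ≤ 1 − ν_m(E). -/
open scoped Classical ENNReal NNReal
open Filter MeasureTheory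

noncomputable section

variable {E : Type*}

lemma summable_of_tsum_one {E : Type*} {f : E → ℝ} (h : ∑' j, f j = 1) : Summable f := by
  by_contra hs
  rw [tsum_eq_zero_of_not_summable hs] at h
  norm_num at h

lemma matPow_stochastic {E : Type*} [Countable E] {P : E → E → ℝ} (hP : IsStochastic P)
    (n : ℕ) : IsStochastic (matPow P n) := by
  induction n with
  | zero =>
    constructor
    · intro i j; simp only [matPow]; split <;> norm_num
    · intro i
      have h : ∀ j : E, (if i = j then (1 : ℝ) else 0) = if j = i then 1 else 0 := by
        intro j; simp [eq_comm]
      simp only [matPow, h]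
      exact tsum_ite_eq i 1
  | succ n ih =>
    constructor
    · intro i j
      exact tsum_nonneg fun k => mul_nonneg (ih.1 i k) (hP.1 k j)
    · intro i
      obtain ⟨Q, hQ⟩ : ∃ Q : E → E → ℝ, Q = matPow P n := ⟨_, rfl⟩
      have hQnn : ∀ j k, 0 ≤ Q j k := hQ ▸ ih.1
      have hQ2 : ∀ j, ∑' k, Q j k = 1 := hQ ▸ ih.2
      have hQsum : Summable (Q i) := summable_of_tsum_one (hQ2 i)
      have hd : Summable (fun p : E × E => Q i p.1 * P p.1 p.2) := by
        refine (summable_prod_of_nonneg ?_).mpr ⟨?_, ?_⟩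
        · intro p; exact mul_nonneg (hQnn i p.1) (hP.1 p.1 p.2)
        · intro k
          simpa using (summable_of_tsum_one (hP.2 k)).mul_left (Q i k)
        · simpa only [tsum_mul_left, hP.2, mul_one] using hQsum
      have hPle1 : ∀ k j, P k j ≤ 1 := by
        intro k j
        rw [← hP.2 k]
        exact Summable.le_tsum (summable_of_tsum_one (hP.2 k)) j fun b _ => hP.1 k b
      have hcomm : ∑' (j : E) (k : E), Q i k * P k j
          = ∑' (k : E) (j : E), Q i k * P k j := by
        refine Summable.tsum_comm' hd ?_ ?_
        · intro k; exact (summable_of_tsum_one (hP.2 k)).mul_left _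
        · intro j
          refine Summable.of_nonneg_of_le (fun k => mul_nonneg (hQnn i k) (hP.1 k j))
            (fun k => ?_) hQsum
          calc Q i k * P k j ≤ Q i k * 1 :=
                mul_le_mul_of_nonneg_left (hPle1 k j) (hQnn i k)
            _ = Q i k := mul_one _
      show ∑' j, ∑' k, matPow P n i k * P k j = 1
      rw [← hQ, hcomm]
      simp only [tsum_mul_left, hP.2, mul_one]
      exact hQ2 i

/-- If E is ν_m-small for P then Λ₁(P^m) ≤ 1 − ν_m(E). -/
theorem stmt1 {E : Type*} [Countable E] (P : E → E → ℝ) (m : ℕ) (nm : E → ℝ)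
    (hP : IsStochastic P) (hm : 1 ≤ m)
    (hnn : ∀ k, 0 ≤ nm k) (hpos : 0 < ∑' k, nm k)
    (hsmall : ∀ i k, nm k ≤ matPow P m i k) :
    ergCoeff (matPow P m) ≤ 1 - ∑' k, nm k := by
  have hE : Nonempty E := by
    by_contra h
    rw [not_nonempty_iff] at h
    rw [tsum_empty] at hpos
    exact lt_irrefl _ hpos
  set S := ∑' k, nm k with hS
  obtain ⟨i0⟩ := hE
  have hQ := matPow_stochastic hP m
  have hrow : ∀ i : E, Summable (matPow P m i) := fun i => summable_of_tsum_one (hQ.2 i)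
  have hnmsum : Summable nm := Summable.of_nonneg_of_le hnn (hsmall i0) (hrow i0)
  have hSle : S ≤ 1 := by
    rw [hS, ← hQ.2 i0]
    exact Summable.tsum_le_tsum (hsmall i0) hnmsum (hrow i0)
  have key : ∀ p : E × E, ∑' k, |matPow P m p.1 k - matPow P m p.2 k| ≤ 2 * (1 - S) := by
    intro p
    have h1 := hrow p.1
    have h2 := hrow p.2
    have hrhs : Summable (fun k => matPow P m p.1 k + matPow P m p.2 k - 2 * nm k) :=
      (h1.add h2).sub (hnmsum.mul_left 2)
    have hle : ∀ k, |matPow P m p.1 k - matPow P m p.2 k|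
        ≤ matPow P m p.1 k + matPow P m p.2 k - 2 * nm k := by
      intro k
      rw [abs_sub_le_iff]
      constructor <;> nlinarith [hsmall p.1 k, hsmall p.2 k, hnn k]
    have hlhs : Summable (fun k => |matPow P m p.1 k - matPow P m p.2 k|) :=
      Summable.of_nonneg_of_le (fun k => abs_nonneg _) hle hrhs
    calc ∑' k, |matPow P m p.1 k - matPow P m p.2 k|
        ≤ ∑' k, (matPow P m p.1 k + matPow P m p.2 k - 2 * nm k) :=
          Summable.tsum_le_tsum hle hlhs hrhs
      _ = 1 + 1 - 2 * S := by
          rw [Summable.tsum_sub (h1.add h2) (hnmsum.mul_left 2), Summable.tsum_add h1 h2, tsum_mul_left,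
            hQ.2, hQ.2, hS]
      _ = 2 * (1 - S) := by ring
  have hsup : (⨆ p : E × E, ∑' k, |matPow P m p.1 k - matPow P m p.2 k|) ≤ 2 * (1 - S) :=
    Real.iSup_le key (by linarith)
  show (1 / 2 : ℝ) * (⨆ p : E × E, ∑' k, |matPow P m p.1 k - matPow P m p.2 k|) ≤ 1 - S
  linarith

end
end

section
/- Let E be a countable set, P an irreducible stochastic matrix on E, and π an invariant probability vector for P. Then the following are equivalent: (a) for every i,j the series D(i,j) = ∑_{n=0}^∞ (P^n(i,j) − π(j)) converges and sup_i ∑_j |D(i,j)| < ∞; (b) P is uniformly ergodic, i.e. sup_i ∑_j |P^n(i,j) − π(j)| → 0 as n → ∞. -/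
open scoped Classical ENNReal NNReal
open Filter MeasureTheory

noncomputable section

variable {E : Type*}

/-!
Both conditions are equivalent to an eventual contraction in total variation: for some `L ≥ 1`
and `r < 1`, the distance `rowDev P π n i = ∑ⱼ |Pⁿ(i,j) - π(j)|` satisfies
`rowDev (n + L) i ≤ r * rowDev n i` for all `n` and `i`. Such a contraction gives the bound
`rowDev n i ≤ 2 r^⌊n/L⌋`, which is summable in `n` and uniform in `i`; it yields both uniform
ergodicity and a deviation matrix with bounded row sums. Conversely, uniform ergodicity gives
`rowDev L ≤ 1/2` for some `L`, which is a contraction because `Pⁿ⁺ᴸ - Π = (Pⁿ - Π)(Pᴸ - Π)`.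

The substantial step goes from the deviation matrix to the contraction. Fix `j₀` with
`π(j₀) > 0`. Decomposing `Pⁿ(i,j₀)` along the first passage to `j₀` (a renewal argument) bounds
the partial sums `∑_{n<N} (Pⁿ(i,j₀) - π(j₀))` from below uniformly in `i` and `N`, so every state
reaches `j₀` with probability at least `π(j₀)/2` within a fixed number of steps. As
`Pⁿ(j₀,j₀) → π(j₀)`, this gives Doeblin's condition `Pᴸ(i,j₀) ≥ ε` for all `i`, and then `Pᴸ`
contracts with `r = 1 - ε`.
-/

open Topology Finset

section Summation

variable {α β : Type*}

theorem summable_of_tsum_eq_one {f : α → ℝ} (h : ∑' a, f a = 1) : Summable f := by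
  by_contra hf
  simp [tsum_eq_zero_of_not_summable hf] at h

theorem summable_uncurry_of_nonneg {F : α → β → ℝ} (h0 : ∀ a b, 0 ≤ F a b)
    (h1 : ∀ a, Summable (F a)) (h2 : Summable fun a => ∑' b, F a b) :
    Summable (Function.uncurry F) :=
  (summable_prod_of_nonneg fun p => h0 p.1 p.2).mpr ⟨h1, h2⟩

theorem Summable.mul_of_abs_le {f g : α → ℝ} {C : ℝ} (hf : Summable f) (hg : ∀ a, |g a| ≤ C) :
    Summable fun a => f a * g a :=
  (hf.abs.mul_right C).of_norm_bounded fun a => by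
    rw [Real.norm_eq_abs, abs_mul]
    exact mul_le_mul_of_nonneg_left (hg a) (abs_nonneg _)

theorem tsum_abs_tsum_mul_le {h : α → ℝ} {K : α → β → ℝ} {C : ℝ} (hh : Summable h)
    (hK : ∀ a, Summable fun b => |K a b|) (hKC : ∀ a, ∑' b, |K a b| ≤ C) :
    ∑' b, |∑' a, h a * K a b| ≤ C * ∑' a, |h a| := by
  have hF : Summable (Function.uncurry fun a b => |h a| * |K a b|) :=
    summable_uncurry_of_nonneg (fun a b => by positivity) (fun a => (hK a).mul_left _)
      (.of_nonneg_of_le (fun a => by positivity)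
        (fun a => by rw [tsum_mul_left]; exact mul_le_mul_of_nonneg_left (hKC a) (abs_nonneg _))
        (hh.abs.mul_right C))
  have hcol : ∀ b, Summable fun a => |h a| * |K a b| := fun b => hF.prod_symm.prod_factor b
  have hinner : ∀ b, |∑' a, h a * K a b| ≤ ∑' a, |h a| * |K a b| := fun b => by
    simpa only [Real.norm_eq_abs, abs_mul] using
      norm_tsum_le_tsum_norm (f := fun a => h a * K a b)
        (by simpa only [Real.norm_eq_abs, abs_mul] using hcol b)
  calc ∑' b, |∑' a, h a * K a b| ≤ ∑' b, ∑' a, |h a| * |K a b| :=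
        Summable.tsum_le_tsum hinner
          (.of_nonneg_of_le (fun b => abs_nonneg _) hinner hF.prod_symm.prod) hF.prod_symm.prod
    _ = ∑' a, |h a| * ∑' b, |K a b| := by simp only [hF.tsum_comm, tsum_mul_left]
    _ ≤ ∑' a, |h a| * C :=
        Summable.tsum_le_tsum (fun a => mul_le_mul_of_nonneg_left (hKC a) (abs_nonneg _))
          (by simpa only [Function.uncurry_apply_pair, tsum_mul_left] using hF.prod)
          (hh.abs.mul_right C)
    _ = C * ∑' a, |h a| := by rw [tsum_mul_right, mul_comm]

theorem summable_pow_div {r : ℝ} (hr0 : 0 ≤ r) (hr1 : r < 1) (L : ℕ) [NeZero L] :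
    Summable fun n : ℕ => r ^ (n / L) := by
  have := (summable_geometric_of_lt_one hr0 hr1).mul_of_nonneg
    (.of_finite : Summable fun _ : Fin L => (1 : ℝ)) (fun n => by positivity) (fun _ => zero_le_one)
  exact ((Nat.divModEquiv L).summable_iff.mpr this).congr fun n => mul_one _

end Summation

section RenewalSums

theorem sum_range_sum_range_succ_mul (h q : ℕ → ℝ) (N : ℕ) :
    ∑ n ∈ range N, ∑ t ∈ range (n + 1), h t * q (n - t) =
      ∑ t ∈ range N, h t * ∑ m ∈ range (N - t), q m := by
  induction N with
  | zero => simp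
  | succ N ih =>
    have hsplit : ∀ t ∈ range (N + 1), h t * ∑ m ∈ range (N + 1 - t), q m =
        h t * ∑ m ∈ range (N - t), q m + h t * q (N - t) := fun t ht => by
      rw [Nat.sub_add_comm (mem_range_succ_iff.mp ht), sum_range_succ, mul_add]
    rw [sum_range_succ, ih, sum_congr rfl hsplit, sum_add_distrib,
      sum_range_succ (fun t => h t * ∑ m ∈ range (N - t), q m) N]
    simp

/-- The lower bound `d - 2 * c₀` does not involve `h`; applied with `h` the first-passage
distribution from `i`, this makes it uniform in the starting state `i`. -/
theorem sub_le_sum_range_convolution_sub {h p : ℕ → ℝ} {c c₀ d : ℝ} (h0 : ∀ t, 0 ≤ h t)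
    (h1 : ∀ N, ∑ t ∈ range N, h t ≤ 1) (hc : 0 ≤ c)
    (hp : ∀ m, |∑ n ∈ range m, (p n - c)| ≤ c₀)
    (hd : Tendsto (fun N => ∑ n ∈ range N, (∑ t ∈ range (n + 1), h t * p (n - t) - c))
      atTop (𝓝 d)) (N : ℕ) :
    d - 2 * c₀ ≤ ∑ n ∈ range N, (∑ t ∈ range (n + 1), h t * p (n - t) - c) := by
  set S := fun N => ∑ n ∈ range N, (∑ t ∈ range (n + 1), h t * p (n - t) - c)
  set A := fun N => ∑ t ∈ range N, h t * ∑ m ∈ range (N - t), (p m - c)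
  -- `B N = 𝔼[min τ N]` for a renewal time `τ` with distribution `h`
  set B := fun N => ∑ n ∈ range N, (1 - ∑ t ∈ range (n + 1), h t)
  have hSAB : ∀ N, S N = A N - c * B N := fun N => by
    simp only [S, A, B]
    rw [← sum_range_sum_range_succ_mul h (fun m => p m - c), mul_sum, ← sum_sub_distrib]
    refine sum_congr rfl fun n _ => ?_
    simp only [mul_sub, sum_sub_distrib, ← sum_mul]
    ring
  have hA : ∀ N, |A N| ≤ c₀ := fun N => by
    have hc₀ : 0 ≤ c₀ := (abs_nonneg _).trans (hp 0)
    calc |A N| ≤ ∑ t ∈ range N, h t * c₀ := by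
          refine (abs_sum_le_sum_abs _ _).trans (sum_le_sum fun t _ => ?_)
          rw [abs_mul, abs_of_nonneg (h0 t)]
          exact mul_le_mul_of_nonneg_left (hp _) (h0 t)
      _ ≤ c₀ := by rw [← sum_mul]; exact mul_le_of_le_one_left hc₀ (h1 N)
  have hB : Monotone B := monotone_nat_of_le_succ fun N => by
    simp only [B]
    rw [sum_range_succ (fun n => 1 - ∑ t ∈ range (n + 1), h t)]
    linarith [h1 (N + 1)]
  -- let `N' → ∞` in `c * B N ≤ c * B N' = A N' - S N' ≤ c₀ - S N'`
  have hBd : c * B N ≤ c₀ - d :=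
    ge_of_tendsto (tendsto_const_nhds.sub hd) <| eventually_atTop.mpr ⟨N, fun N' hN' => by
      have := mul_le_mul_of_nonneg_left (hB hN') hc
      linarith [hSAB N', (abs_le.mp (hA N')).2]⟩
  linarith [hSAB N, (abs_le.mp (hA N)).1]

theorem exists_lt_half_le_of_le_sum_range_sub {x : ℕ → ℝ} {c σ : ℝ} {N : ℕ}
    (hN : 2 * σ < N * c) (hx : -σ ≤ ∑ n ∈ range N, (x n - c)) : ∃ n < N, c / 2 ≤ x n := by
  by_contra! hlt
  have : ∑ n ∈ range N, x n ≤ N * (c / 2) := by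
    simpa using sum_le_card_nsmul _ _ _ fun n hn => (hlt n (mem_range.mp hn)).le
  rw [sum_sub_distrib, sum_const, card_range, nsmul_eq_mul] at hx
  linarith

theorem tendsto_of_tendsto_sum_range_sub {x : ℕ → ℝ} {c d : ℝ}
    (h : Tendsto (fun N => ∑ n ∈ range N, (x n - c)) atTop (𝓝 d)) : Tendsto x atTop (𝓝 c) := by
  have := ((h.comp (tendsto_add_atTop_nat 1)).sub h).add_const c
  rw [sub_self, zero_add] at this
  refine this.congr fun N => ?_
  simp only [Function.comp_apply, sum_range_succ]
  ring

end RenewalSums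

section MatPow

variable {P : E → E → ℝ} {pi : E → ℝ}

theorem IsStochastic.summable (hP : IsStochastic P) (i : E) : Summable (P i) :=
  summable_of_tsum_eq_one (hP.2 i)

theorem IsStochastic.abs_le_one (hP : IsStochastic P) (i j : E) : |P i j| ≤ 1 := by
  rw [abs_of_nonneg (hP.1 i j), ← hP.2 i]
  exact (hP.summable i).le_tsum j fun k _ => hP.1 i k

theorem matPow_nonneg (hP : IsStochastic P) (n : ℕ) (i j : E) : 0 ≤ matPow P n i j := by
  induction n generalizing j with
  | zero => unfold matPow; split_ifs <;> norm_num
  | succ n ih => exact tsum_nonneg fun k => mul_nonneg (ih k) (hP.1 k j)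

theorem hasSum_matPow (hP : IsStochastic P) (n : ℕ) (i : E) : HasSum (matPow P n i) 1 := by
  induction n with
  | zero =>
    convert hasSum_ite_eq i (1 : ℝ) using 1
    ext j
    simp [matPow, eq_comm]
  | succ n ih =>
    have hrow : ∀ k, ∑' j, matPow P n i k * P k j = matPow P n i k := fun k => by
      rw [tsum_mul_left, hP.2 k, mul_one]
    have hF := summable_uncurry_of_nonneg (F := fun k j => matPow P n i k * P k j)
      (fun k j => mul_nonneg (matPow_nonneg hP n i k) (hP.1 k j))
      (fun k => (hP.summable k).mul_left _) (by simpa only [hrow] using ih.summable)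
    have hcol : Summable fun j => ∑' k, matPow P n i k * P k j := hF.prod_symm.prod
    have htot : ∑' j, ∑' k, matPow P n i k * P k j = 1 := by
      rw [hF.tsum_comm]
      simp only [hrow, ih.tsum_eq]
    exact htot ▸ hcol.hasSum

theorem summable_matPow (hP : IsStochastic P) (n : ℕ) (i : E) : Summable (matPow P n i) :=
  (hasSum_matPow hP n i).summable

theorem abs_matPow_le_one (hP : IsStochastic P) (n : ℕ) (i j : E) : |matPow P n i j| ≤ 1 := by
  rw [abs_of_nonneg (matPow_nonneg hP n i j), ← (hasSum_matPow hP n i).tsum_eq]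
  exact (summable_matPow hP n i).le_tsum j fun k _ => matPow_nonneg hP n i k

theorem matPow_add (hP : IsStochastic P) (m n : ℕ) (i j : E) :
    matPow P (m + n) i j = ∑' k, matPow P m i k * matPow P n k j := by
  induction n generalizing j with
  | zero => simp [matPow]
  | succ n ih =>
    have hF := summable_uncurry_of_nonneg
      (F := fun k l => matPow P m i k * (matPow P n k l * P l j))
      (fun k l => mul_nonneg (matPow_nonneg hP m i k)
        (mul_nonneg (matPow_nonneg hP n k l) (hP.1 l j)))
      (fun k => ((summable_matPow hP n k).mul_of_abs_le (hP.abs_le_one · j)).mul_left _)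
      (by
        simp only [tsum_mul_left]
        exact (summable_matPow hP m i).mul_of_abs_le (abs_matPow_le_one hP (n + 1) · j))
    calc matPow P (m + (n + 1)) i j = ∑' l, (∑' k, matPow P m i k * matPow P n k l) * P l j := by
          simp only [← ih]; rfl
      _ = ∑' k, matPow P m i k * matPow P (n + 1) k j := by
          simp only [← tsum_mul_right, mul_assoc, hF.tsum_comm, tsum_mul_left]; rfl

theorem matPow_one (i j : E) : matPow P 1 i j = P i j := by
  simp [matPow]

theorem matPow_succ' (hP : IsStochastic P) (n : ℕ) (i j : E) :
    matPow P (n + 1) i j = ∑' k, P i k * matPow P n k j := by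
  simp only [add_comm n 1, matPow_add hP 1 n, matPow_one]

theorem mul_le_matPow_add (hP : IsStochastic P) (m n : ℕ) (i k j : E) :
    matPow P m i k * matPow P n k j ≤ matPow P (m + n) i j := by
  rw [matPow_add hP]
  exact ((summable_matPow hP m i).mul_of_abs_le (abs_matPow_le_one hP n · j)).le_tsum k
    fun l _ => mul_nonneg (matPow_nonneg hP m i l) (matPow_nonneg hP n l j)

theorem IsProbVec.summable (hpi : IsProbVec pi) : Summable pi := summable_of_tsum_eq_one hpi.2

theorem InvariantFor.hasSum_mul_matPow (hinv : InvariantFor pi P) (hP : IsStochastic P)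
    (hpi : IsProbVec pi) (n : ℕ) (j : E) : HasSum (fun i => pi i * matPow P n i j) (pi j) := by
  induction n generalizing j with
  | zero =>
    convert hasSum_ite_eq j (pi j) using 2 with i
    by_cases h : i = j <;> simp [matPow, h]
  | succ n ih =>
    have hF := summable_uncurry_of_nonneg (F := fun i k => pi i * (matPow P n i k * P k j))
      (fun i k => mul_nonneg (hpi.1 i) (mul_nonneg (matPow_nonneg hP n i k) (hP.1 k j)))
      (fun i => ((summable_matPow hP n i).mul_of_abs_le (hP.abs_le_one · j)).mul_left _)
      (by
        simp only [tsum_mul_left]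
        exact hpi.summable.mul_of_abs_le (abs_matPow_le_one hP (n + 1) · j))
    have htot : ∑' i, pi i * matPow P (n + 1) i j = pi j := calc
      _ = ∑' i, ∑' k, pi i * (matPow P n i k * P k j) := by simp only [tsum_mul_left]; rfl
      _ = ∑' k, (∑' i, pi i * matPow P n i k) * P k j := by
          rw [← hF.tsum_comm]; simp only [← tsum_mul_right, mul_assoc]
      _ = pi j := by simp only [(ih _).tsum_eq, (hinv j).tsum_eq]
    exact htot ▸ (hpi.summable.mul_of_abs_le (abs_matPow_le_one hP (n + 1) · j)).hasSum

end MatPow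

def rowDev (P : E → E → ℝ) (pi : E → ℝ) (n : ℕ) (i : E) : ℝ := ∑' j, |matPow P n i j - pi j|

section RowDev

variable {P : E → E → ℝ} {pi : E → ℝ}

theorem summable_abs_matPow_sub (hP : IsStochastic P) (hpi : IsProbVec pi) (n : ℕ) (i : E) :
    Summable fun j => |matPow P n i j - pi j| :=
  ((summable_matPow hP n i).sub hpi.summable).abs

theorem ofReal_rowDev (hP : IsStochastic P) (hpi : IsProbVec pi) (n : ℕ) (i : E) :
    ENNReal.ofReal (rowDev P pi n i) = ∑' j, ENNReal.ofReal |matPow P n i j - pi j| :=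
  ENNReal.ofReal_tsum_of_nonneg (fun _ => abs_nonneg _) (summable_abs_matPow_sub hP hpi n i)

theorem rowDev_le_two (hP : IsStochastic P) (hpi : IsProbVec pi) (n : ℕ) (i : E) :
    rowDev P pi n i ≤ 2 := by
  have hsum := (hasSum_matPow hP n i).add hpi.summable.hasSum
  rw [hpi.2, one_add_one_eq_two] at hsum
  refine hsum.tsum_eq ▸ Summable.tsum_le_tsum (fun j => ?_) (summable_abs_matPow_sub hP hpi n i)
    hsum.summable
  rw [abs_le]
  constructor <;> linarith [matPow_nonneg hP n i j, hpi.1 j]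

/-- Since the centred row `P^n(i, ·) - π` has total mass zero, any column-constant `c` may be
subtracted from `P^L` in the Chapman–Kolmogorov equation. -/
theorem matPow_add_sub_eq_tsum (hP : IsStochastic P) (hpi : IsProbVec pi)
    (hinv : InvariantFor pi P) (c : E → ℝ) (n L : ℕ) (i j : E) :
    matPow P (n + L) i j - pi j = ∑' k, (matPow P n i k - pi k) * (matPow P L k j - c j) := by
  have hmass := (hasSum_matPow hP n i).sub hpi.summable.hasSum
  rw [hpi.2, sub_self] at hmass
  have hCK : HasSum (fun k => matPow P n i k * matPow P L k j) (matPow P (n + L) i j) :=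
    matPow_add hP n L i j ▸
      ((summable_matPow hP n i).mul_of_abs_le (abs_matPow_le_one hP L · j)).hasSum
  refine (HasSum.tsum_eq ?_).symm
  convert (hCK.sub (hinv.hasSum_mul_matPow hP hpi L j)).sub (hmass.mul_right (c j)) using 1 <;>
    (try ext) <;> ring

theorem rowDev_add_le (hP : IsStochastic P) (hpi : IsProbVec pi) (hinv : InvariantFor pi P)
    {c : E → ℝ} (hc : Summable c) {L : ℕ} {C : ℝ}
    (hC : ∀ k, ∑' j, |matPow P L k j - c j| ≤ C) (n : ℕ) (i : E) :
    rowDev P pi (n + L) i ≤ C * rowDev P pi n i := by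
  simp only [rowDev, matPow_add_sub_eq_tsum hP hpi hinv c]
  exact tsum_abs_tsum_mul_le ((summable_matPow hP n i).sub hpi.summable)
    (fun k => ((summable_matPow hP L k).sub hc).abs) hC

theorem rowDev_add_le_of_le_matPow (hP : IsStochastic P) (hpi : IsProbVec pi)
    (hinv : InvariantFor pi P) {L : ℕ} {ε : ℝ} {j₀ : E} (hε : ∀ k, ε ≤ matPow P L k j₀)
    (n : ℕ) (i : E) : rowDev P pi (n + L) i ≤ (1 - ε) * rowDev P pi n i := by
  refine rowDev_add_le hP hpi hinv (hasSum_pi_single j₀ ε).summable (fun k => ?_) n i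
  have hnonneg : ∀ j, 0 ≤ matPow P L k j - (Pi.single j₀ ε : E → ℝ) j := fun j => by
    by_cases hj : j = j₀
    · subst hj; simpa using hε k
    · simpa [Pi.single_apply, hj] using matPow_nonneg hP L k j
  simp only [abs_of_nonneg (hnonneg _)]
  exact ((hasSum_matPow hP L k).sub (hasSum_pi_single j₀ ε)).tsum_eq.le

theorem rowDev_le_two_mul_pow_div (hP : IsStochastic P) (hpi : IsProbVec pi) {L : ℕ} {r : ℝ}
    (hL : 0 < L) (hr : 0 ≤ r) (h : ∀ n i, rowDev P pi (n + L) i ≤ r * rowDev P pi n i)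
    (n : ℕ) (i : E) : rowDev P pi n i ≤ 2 * r ^ (n / L) := by
  induction n using Nat.strong_induction_on with
  | _ n ih =>
    rcases lt_or_ge n L with hn | hn
    · simpa [Nat.div_eq_of_lt hn] using rowDev_le_two hP hpi n i
    · obtain ⟨m, rfl⟩ := Nat.exists_eq_add_of_le' hn
      calc rowDev P pi (m + L) i ≤ r * rowDev P pi m i := h m i
        _ ≤ r * (2 * r ^ (m / L)) := mul_le_mul_of_nonneg_left (ih m (by omega)) hr
        _ = 2 * r ^ ((m + L) / L) := by rw [Nat.add_div_right m hL, pow_succ]; ring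

end RowDev

/-- `firstPassage P j₀ t i` is the probability that the chain started at `i` visits `j₀` for the
first time at time `t`. -/
def firstPassage (P : E → E → ℝ) (j₀ : E) : ℕ → E → ℝ
  | 0 => fun i => if i = j₀ then 1 else 0
  | t + 1 => fun i => if i = j₀ then 0 else ∑' k, P i k * firstPassage P j₀ t k

section FirstPassage

variable {P : E → E → ℝ} {j₀ : E}

theorem firstPassage_nonneg (hP : IsStochastic P) (t : ℕ) (i : E) : 0 ≤ firstPassage P j₀ t i := by
  induction t generalizing i with
  | zero => unfold firstPassage; split_ifs <;> norm_num
  | succ t ih =>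
    unfold firstPassage
    split_ifs
    exacts [le_rfl, tsum_nonneg fun k => mul_nonneg (hP.1 i k) (ih k)]

theorem sum_range_firstPassage_le_one (hP : IsStochastic P) (N : ℕ) (i : E) :
    ∑ t ∈ range N, firstPassage P j₀ t i ≤ 1 := by
  induction N generalizing i with
  | zero => simp
  | succ N ih =>
    rw [sum_range_succ']
    by_cases hi : i = j₀
    · simp [firstPassage, hi]
    have hle : ∀ t ∈ range N, ∀ k, firstPassage P j₀ t k ≤ 1 := fun t ht k =>
      (single_le_sum (fun t _ => firstPassage_nonneg hP t k) ht).trans (ih k)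
    have hsum : ∀ t ∈ range N, Summable fun k => P i k * firstPassage P j₀ t k := fun t ht =>
      (hP.summable i).mul_of_abs_le fun k => by
        rw [abs_of_nonneg (firstPassage_nonneg hP t k)]; exact hle t ht k
    simp only [firstPassage, hi, if_false, add_zero]
    rw [← Summable.tsum_finsetSum hsum]
    calc ∑' k, ∑ t ∈ range N, P i k * firstPassage P j₀ t k ≤ ∑' k, P i k :=
          Summable.tsum_le_tsum
            (fun k => by rw [← mul_sum]; exact mul_le_of_le_one_right (hP.1 i k) (ih k))
            (summable_sum hsum) (hP.summable i)
      _ = 1 := hP.2 i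

theorem firstPassage_le_one (hP : IsStochastic P) (t : ℕ) (i : E) : firstPassage P j₀ t i ≤ 1 :=
  (single_le_sum (fun t _ => firstPassage_nonneg hP t i) (self_mem_range_succ t)).trans
    (sum_range_firstPassage_le_one hP (t + 1) i)

theorem matPow_eq_sum_firstPassage (hP : IsStochastic P) (n : ℕ) (i : E) :
    matPow P n i j₀ = ∑ t ∈ range (n + 1), firstPassage P j₀ t i * matPow P (n - t) j₀ j₀ := by
  induction n generalizing i with
  | zero => by_cases hi : i = j₀ <;> simp [matPow, firstPassage, hi]
  | succ n ih =>
    rw [sum_range_succ']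
    by_cases hi : i = j₀
    · simp [firstPassage, hi]
    have hsum : ∀ t ∈ range (n + 1),
        Summable fun k => P i k * (firstPassage P j₀ t k * matPow P (n - t) j₀ j₀) := fun t _ =>
      (hP.summable i).mul_of_abs_le fun k => by
        rw [abs_mul, abs_of_nonneg (firstPassage_nonneg hP t k)]
        exact mul_le_one₀ (firstPassage_le_one hP t k) (abs_nonneg _) (abs_matPow_le_one hP _ _ _)
    calc matPow P (n + 1) i j₀
        = ∑' k, ∑ t ∈ range (n + 1), P i k * (firstPassage P j₀ t k * matPow P (n - t) j₀ j₀) := by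
          simp only [matPow_succ' hP, ih, mul_sum]
      _ = ∑ t ∈ range (n + 1), firstPassage P j₀ (t + 1) i * matPow P (n + 1 - (t + 1)) j₀ j₀ := by
          rw [Summable.tsum_finsetSum hsum]
          refine sum_congr rfl fun t _ => ?_
          simp only [firstPassage, hi, if_false, Nat.add_sub_add_right, ← tsum_mul_right, mul_assoc]
      _ = _ := by simp [firstPassage, hi]

end FirstPassage

section DeviationMatrix

variable {P : E → E → ℝ} {pi : E → ℝ}

theorem IsProbVec.exists_pos (hpi : IsProbVec pi) : ∃ j, 0 < pi j := by
  by_contra! h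
  have : pi = 0 := funext fun j => le_antisymm (h j) (hpi.1 j)
  simpa [this] using hpi.2

theorem exists_neg_le_sum_range_matPow_sub (hP : IsStochastic P) {j₀ : E} {D : E → ℝ} {M : ℝ}
    (hj₀ : 0 ≤ pi j₀)
    (hD : ∀ i, Tendsto (fun N => ∑ n ∈ range N, (matPow P n i j₀ - pi j₀)) atTop (𝓝 (D i)))
    (hM : ∀ i, |D i| ≤ M) : ∃ σ, ∀ N i, -σ ≤ ∑ n ∈ range N, (matPow P n i j₀ - pi j₀) := by
  obtain ⟨c₀, hc₀⟩ := (hD j₀).abs.bddAbove_range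
  refine ⟨M + 2 * c₀, fun N i => ?_⟩
  have := sub_le_sum_range_convolution_sub (h := (firstPassage P j₀ · i))
    (p := (matPow P · j₀ j₀)) (firstPassage_nonneg hP · i) (sum_range_firstPassage_le_one hP · i)
    hj₀ (fun m => hc₀ ⟨m, rfl⟩) (by simpa only [← matPow_eq_sum_firstPassage hP] using hD i) N
  simp only [← matPow_eq_sum_firstPassage hP] at this
  linarith [(abs_le.mp (hM i)).1]

theorem exists_le_matPow_of_neg_le_sum_range (hP : IsStochastic P) {j₀ : E} {σ : ℝ}
    (hj₀ : 0 < pi j₀) (hσ : ∀ N i, -σ ≤ ∑ n ∈ range N, (matPow P n i j₀ - pi j₀))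
    (hdiag : Tendsto (matPow P · j₀ j₀) atTop (𝓝 (pi j₀))) :
    ∃ L ε, 0 < L ∧ 0 < ε ∧ ∀ i, ε ≤ matPow P L i j₀ := by
  obtain ⟨N, hN⟩ := exists_nat_gt (2 * σ / pi j₀)
  obtain ⟨m, hm⟩ := eventually_atTop.mp (hdiag.eventually (eventually_ge_nhds (half_lt_self hj₀)))
  -- from `i`, reach `j₀` at some time `n < N`, then return to `j₀` after `N + m + 1 - n ≥ m` steps
  refine ⟨N + m + 1, (pi j₀ / 2) ^ 2, by omega, by positivity, fun i => ?_⟩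
  obtain ⟨n, hn, hni⟩ :=
    exists_lt_half_le_of_le_sum_range_sub (by rwa [div_lt_iff₀ hj₀] at hN) (hσ N i)
  calc (pi j₀ / 2) ^ 2 ≤ matPow P n i j₀ * matPow P (N + m + 1 - n) j₀ j₀ := by
        rw [sq]
        exact mul_le_mul hni (hm _ (by omega)) (by positivity) (matPow_nonneg hP n i j₀)
    _ ≤ matPow P (n + (N + m + 1 - n)) i j₀ := mul_le_matPow_add hP _ _ _ _ _
    _ = matPow P (N + m + 1) i j₀ := by rw [Nat.add_sub_cancel' (by omega)]

end DeviationMatrix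

def EventuallyContracts (P : E → E → ℝ) (pi : E → ℝ) : Prop :=
  ∃ L r, 0 < L ∧ 0 ≤ r ∧ r < 1 ∧ ∀ n i, rowDev P pi (n + L) i ≤ r * rowDev P pi n i

section EventuallyContracts

variable {P : E → E → ℝ} {pi : E → ℝ}

theorem eventuallyContracts_of_deviationMatrix (hP : IsStochastic P) (hpi : IsProbVec pi)
    (hinv : InvariantFor pi P) {D : E → E → ℝ}
    (hD : ∀ i j, Tendsto (fun N => ∑ n ∈ range N, (matPow P n i j - pi j)) atTop (𝓝 (D i j)))
    (hfin : (⨆ i, ∑' j, ENNReal.ofReal |D i j|) < ⊤) : EventuallyContracts P pi := by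
  obtain ⟨j₀, hj₀⟩ := hpi.exists_pos
  have hM : ∀ i, |D i j₀| ≤ (⨆ i, ∑' j, ENNReal.ofReal |D i j|).toReal := fun i => by
    rw [← ENNReal.toReal_ofReal (abs_nonneg (D i j₀))]
    exact ENNReal.toReal_mono hfin.ne
      ((ENNReal.le_tsum j₀).trans (le_iSup (fun i => ∑' j, ENNReal.ofReal |D i j|) i))
  obtain ⟨σ, hσ⟩ := exists_neg_le_sum_range_matPow_sub hP hj₀.le (fun i => hD i j₀) hM
  obtain ⟨L, ε, hL, hε, hLε⟩ := exists_le_matPow_of_neg_le_sum_range hP hj₀ hσ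
    (tendsto_of_tendsto_sum_range_sub (hD j₀ j₀))
  refine ⟨L, 1 - ε, hL, ?_, by linarith, rowDev_add_le_of_le_matPow hP hpi hinv hLε⟩
  linarith [hLε j₀, (le_abs_self _).trans (abs_matPow_le_one hP L j₀ j₀)]

theorem eventuallyContracts_of_tendsto (hP : IsStochastic P) (hpi : IsProbVec pi)
    (hinv : InvariantFor pi P)
    (hT : Tendsto (fun n => ⨆ i, ∑' j, ENNReal.ofReal |matPow P n i j - pi j|) atTop (𝓝 0)) :
    EventuallyContracts P pi := by
  obtain ⟨L, hL, hL0⟩ := ((hT.eventually (gt_mem_nhds (ENNReal.ofReal_pos.mpr one_half_pos))).and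
    (eventually_gt_atTop 0)).exists
  refine ⟨L, 1 / 2, hL0, by norm_num, by norm_num,
    rowDev_add_le hP hpi hinv hpi.summable fun k => ?_⟩
  have := (le_iSup (fun i => ∑' j, ENNReal.ofReal |matPow P L i j - pi j|) k).trans_lt hL
  rw [← ofReal_rowDev hP hpi, ENNReal.ofReal_lt_ofReal_iff (by norm_num)] at this
  exact this.le

theorem EventuallyContracts.exists_summable_bound (h : EventuallyContracts P pi)
    (hP : IsStochastic P) (hpi : IsProbVec pi) :
    ∃ g : ℕ → ℝ, Summable g ∧ (∀ n, 0 ≤ g n) ∧ ∀ n i, rowDev P pi n i ≤ g n := by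
  obtain ⟨L, r, hL, hr0, hr1, hcontr⟩ := h
  have : NeZero L := ⟨hL.ne'⟩
  exact ⟨fun n => 2 * r ^ (n / L), (summable_pow_div hr0 hr1 L).mul_left 2,
    fun n => by positivity, rowDev_le_two_mul_pow_div hP hpi hL hr0 hcontr⟩

theorem EventuallyContracts.tendsto (h : EventuallyContracts P pi) (hP : IsStochastic P)
    (hpi : IsProbVec pi) :
    Tendsto (fun n => ⨆ i, ∑' j, ENNReal.ofReal |matPow P n i j - pi j|) atTop (𝓝 0) := by
  obtain ⟨g, hg, -, hbound⟩ := h.exists_summable_bound hP hpi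
  have hg0 : Tendsto (fun n => ENNReal.ofReal (g n)) atTop (𝓝 0) := by
    simpa using ENNReal.tendsto_ofReal hg.tendsto_atTop_zero
  refine tendsto_of_tendsto_of_tendsto_of_le_of_le tendsto_const_nhds hg0 (fun _ => zero_le)
    fun n => iSup_le fun i => ?_
  rw [← ofReal_rowDev hP hpi]
  exact ENNReal.ofReal_le_ofReal (hbound n i)

theorem EventuallyContracts.exists_deviationMatrix (h : EventuallyContracts P pi)
    (hP : IsStochastic P) (hpi : IsProbVec pi) :
    ∃ D : E → E → ℝ,
      (∀ i j, Tendsto (fun N => ∑ n ∈ range N, (matPow P n i j - pi j)) atTop (𝓝 (D i j))) ∧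
      (⨆ i, ∑' j, ENNReal.ofReal |D i j|) < ⊤ := by
  obtain ⟨g, hg, hg0, hbound⟩ := h.exists_summable_bound hP hpi
  have hsum : ∀ i j, Summable fun n => |matPow P n i j - pi j| := fun i j =>
    hg.of_nonneg_of_le (fun _ => abs_nonneg _) fun n =>
      ((summable_abs_matPow_sub hP hpi n i).le_tsum j fun _ _ => abs_nonneg _).trans (hbound n i)
  refine ⟨fun i j => ∑' n, (matPow P n i j - pi j),
    fun i j => (hsum i j).of_abs.hasSum.tendsto_sum_nat, ?_⟩
  refine (iSup_le fun i => ?_).trans_lt (ENNReal.ofReal_lt_top (r := ∑' n, g n))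
  calc ∑' j, ENNReal.ofReal |∑' n, (matPow P n i j - pi j)|
      ≤ ∑' j, ∑' n, ENNReal.ofReal |matPow P n i j - pi j| := ENNReal.tsum_le_tsum fun j => by
        rw [← ENNReal.ofReal_tsum_of_nonneg (fun _ => abs_nonneg _) (hsum i j)]
        have := norm_tsum_le_tsum_norm (f := fun n => matPow P n i j - pi j)
          (by simpa only [Real.norm_eq_abs] using hsum i j)
        simp only [Real.norm_eq_abs] at this
        exact ENNReal.ofReal_le_ofReal this
    _ = ∑' n, ENNReal.ofReal (rowDev P pi n i) := by
        rw [ENNReal.tsum_comm]; simp only [ofReal_rowDev hP hpi]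
    _ ≤ ∑' n, ENNReal.ofReal (g n) :=
        ENNReal.tsum_le_tsum fun n => ENNReal.ofReal_le_ofReal (hbound n i)
    _ = ENNReal.ofReal (∑' n, g n) := (ENNReal.ofReal_tsum_of_nonneg hg0 hg).symm

end EventuallyContracts

theorem stmt4_general {E : Type*} (P : E → E → ℝ) (pi : E → ℝ)
    (hP : IsStochastic P)
    (hpi : IsProbVec pi) (hpiinv : InvariantFor pi P) :
    (∃ D : E → E → ℝ,
        (∀ i j, Filter.Tendsto
          (fun N => ∑ n ∈ Finset.range N, (matPow P n i j - pi j))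
          Filter.atTop (nhds (D i j))) ∧
        (⨆ i, ∑' j, ENNReal.ofReal |D i j|) < ⊤) ↔
      Filter.Tendsto
        (fun n => ⨆ i, ∑' j, ENNReal.ofReal |matPow P n i j - pi j|)
        Filter.atTop (nhds 0) :=
  ⟨fun ⟨_, hD, hfin⟩ =>
    (eventuallyContracts_of_deviationMatrix hP hpi hpiinv hD hfin).tendsto hP hpi,
    fun hT => (eventuallyContracts_of_tendsto hP hpi hpiinv hT).exists_deviationMatrix hP hpi⟩

/-- existence of a bounded deviation matrix is equivalent to uniform ergodicity. -/
theorem stmt4 {E : Type*} [Countable E] (P : E → E → ℝ) (pi : E → ℝ)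
    (hP : IsStochastic P) (hPirr : IsIrred P)
    (hpi : IsProbVec pi) (hpiinv : InvariantFor pi P) :
    (∃ D : E → E → ℝ,
        (∀ i j, Filter.Tendsto
          (fun N => ∑ n ∈ Finset.range N, (matPow P n i j - pi j))
          Filter.atTop (nhds (D i j))) ∧
        (⨆ i, ∑' j, ENNReal.ofReal |D i j|) < ⊤) ↔
      Filter.Tendsto
        (fun n => ⨆ i, ∑' j, ENNReal.ofReal |matPow P n i j - pi j|)
        Filter.atTop (nhds 0) :=
  stmt4_general P pi hP hpi hpiinv

end
end

section
/- Let E be a countable set, let P and P̃ be irreducible stochastic matrices on E, and let π and ν be invariant probability vectors for P and P̃ respectively. Suppose the deviation matrix of P exists and is bounded, i.e. for every i,j the series D(i,j) = ∑_{n=0}^∞ (P^n(i,j) − π(j)) converges and sup_i ∑_j |D(i,j)| < ∞. Then for every j ∈ E: ν(j) − π(j) = ∑_i ∑_k ν(i) (P̃(i,k) − P(i,k)) D(k,j). -/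
open scoped Classical ENNReal NNReal
open Filter MeasureTheory

noncomputable section

variable {E : Type*}

namespace Stmt5Aux

variable {P : E → E → ℝ}

/-- Fubini for nonneg real functions given iterated summability. -/
lemma swap_nonneg {α β : Type*} {f : α → β → ℝ} (h0 : ∀ a b, 0 ≤ f a b)
    (h1 : ∀ a, Summable (f a)) (h2 : Summable fun a => ∑' b, f a b) :
    (∀ b, Summable fun a => f a b) ∧ (Summable fun b => ∑' a, f a b) ∧
      ∑' a, ∑' b, f a b = ∑' b, ∑' a, f a b := by
  have hprod : Summable (fun p : α × β => f p.1 p.2) := by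
    rw [summable_prod_of_nonneg (fun p => h0 p.1 p.2)]
    exact ⟨h1, h2⟩
  have hswap : Summable (fun p : β × α => f p.2 p.1) := hprod.prod_symm
  have hcomp := (summable_prod_of_nonneg (f := fun p : β × α => f p.2 p.1)
    (fun p => h0 p.2 p.1)).mp hswap
  refine ⟨hcomp.1, hcomp.2, ?_⟩
  exact (Summable.tsum_comm' hprod h1 hcomp.1).symm

lemma rowSummable (hP : IsStochastic P) (i : E) : Summable (P i) := by
  by_contra h
  have := tsum_eq_zero_of_not_summable h
  rw [hP.2 i] at this; norm_num at this

lemma entry_le_one (hP : IsStochastic P) (i j : E) : P i j ≤ 1 := by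
  rw [← hP.2 i]
  exact Summable.le_tsum (rowSummable hP i) j fun k _ => hP.1 i k

lemma matPow_nonneg (hP : IsStochastic P) : ∀ n i j, 0 ≤ matPow P n i j
  | 0, i, j => by unfold matPow; positivity
  | n + 1, i, j => by
    unfold matPow
    exact tsum_nonneg fun k => mul_nonneg (matPow_nonneg hP n i k) (hP.1 k j)

lemma matPow_row (hP : IsStochastic P) :
    ∀ n i, Summable (matPow P n i) ∧ ∑' j, matPow P n i j = 1 := by
  intro n
  induction n with
  | zero =>
    intro i
    constructor
    · apply summable_of_ne_finset_zero (s := {i})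
      intro j hj
      simp only [Finset.mem_singleton] at hj
      show (if i = j then (1:ℝ) else 0) = 0
      simp [show ¬ i = j from fun h => hj h.symm]
    · unfold matPow
      rw [tsum_eq_single i (by
        intro j hj
        show (if i = j then (1:ℝ) else 0) = 0
        simp [show ¬ i = j from fun h => hj h.symm])]
      show (if i = i then (1:ℝ) else 0) = 1
      simp
  | succ n ih =>
    intro i
    have h1 : ∀ k, Summable fun j => matPow P n i k * P k j :=
      fun k => (rowSummable hP k).mul_left _
    have h2 : Summable fun k => ∑' j, matPow P n i k * P k j := by
      have : ∀ k, ∑' j, matPow P n i k * P k j = matPow P n i k := by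
        intro k; rw [tsum_mul_left, hP.2 k, mul_one]
      simpa [this] using (ih i).1
    obtain ⟨hc1, hc2, hc3⟩ := swap_nonneg
      (f := fun k j => matPow P n i k * P k j)
      (fun k j => mul_nonneg (matPow_nonneg hP n i k) (hP.1 k j)) h1 h2
    constructor
    · show Summable fun j => ∑' k, matPow P n i k * P k j
      exact hc2
    · show (∑' j, ∑' k, matPow P n i k * P k j) = 1
      rw [← hc3]
      have : ∀ k, ∑' j, matPow P n i k * P k j = matPow P n i k := by
        intro k; rw [tsum_mul_left, hP.2 k, mul_one]
      simp only [this]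
      exact (ih i).2

lemma matPow_le_one (hP : IsStochastic P) (n : ℕ) (i j : E) : matPow P n i j ≤ 1 := by
  rw [← (matPow_row hP n i).2]
  exact Summable.le_tsum (matPow_row hP n i).1 j fun k _ => matPow_nonneg hP n i k

/-- Left expansion of matrix power. -/
lemma matPow_left (hP : IsStochastic P) :
    ∀ n i j, matPow P (n + 1) i j = ∑' k, P i k * matPow P n k j := by
  intro n
  induction n with
  | zero =>
    intro i j
    show (∑' k, matPow P 0 i k * P k j) = _
    have l : (∑' k, matPow P 0 i k * P k j) = P i j := by
      rw [tsum_eq_single i]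
      · unfold matPow; simp
      · intro k hk; unfold matPow; simp [show ¬ i = k from fun h => hk h.symm]
    have r : (∑' k, P i k * matPow P 0 k j) = P i j := by
      rw [tsum_eq_single j]
      · unfold matPow; simp
      · intro k hk; unfold matPow; simp [hk]
    rw [l, r]
  | succ n ih =>
    intro i j
    show (∑' k, matPow P (n+1) i k * P k j) = ∑' k, P i k * matPow P (n+1) k j
    have e1 : ∀ k, matPow P (n+1) i k * P k j = ∑' l, P i l * matPow P n l k * P k j := by
      intro k; rw [ih i k, ← tsum_mul_right]
    have h0 : ∀ k l, 0 ≤ P i l * matPow P n l k * P k j := fun k l => by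
      have := hP.1 i l; have := matPow_nonneg hP n l k; have := hP.1 k j; positivity
    have hrs : ∀ l : E, Summable fun k => matPow P n l k * P k j := by
      intro l
      apply Summable.of_nonneg_of_le
        (fun k => mul_nonneg (matPow_nonneg hP n l k) (hP.1 k j))
        (fun k => ?_) (matPow_row hP n l).1
      nth_rewrite 2 [show matPow P n l k = matPow P n l k * 1 by ring]
      exact mul_le_mul_of_nonneg_left (entry_le_one hP k j) (matPow_nonneg hP n l k)
    have hrsle : ∀ l : E, (∑' k, matPow P n l k * P k j) ≤ 1 := by
      intro l
      calc (∑' k, matPow P n l k * P k j) ≤ ∑' k, matPow P n l k := by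
            apply Summable.tsum_le_tsum (fun k => ?_) (hrs l) (matPow_row hP n l).1
            nth_rewrite 2 [show matPow P n l k = matPow P n l k * 1 by ring]
            exact mul_le_mul_of_nonneg_left (entry_le_one hP k j) (matPow_nonneg hP n l k)
        _ = 1 := (matPow_row hP n l).2
    have h1 : ∀ l, Summable fun k => P i l * matPow P n l k * P k j := by
      intro l
      have := (hrs l).mul_left (P i l)
      simpa [mul_assoc] using this
    have h2 : Summable fun l => ∑' k, P i l * matPow P n l k * P k j := by
      apply Summable.of_nonneg_of_le
        (fun l => tsum_nonneg fun k => h0 k l) (fun l => ?_) (rowSummable hP i)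
      have e : (∑' k, P i l * matPow P n l k * P k j)
          = P i l * ∑' k, matPow P n l k * P k j := by
        rw [← tsum_mul_left]; exact tsum_congr fun k => by ring
      rw [e]
      nth_rewrite 2 [show P i l = P i l * 1 by ring]
      exact mul_le_mul_of_nonneg_left (hrsle l) (hP.1 i l)
    obtain ⟨hc1, hc2, hc3⟩ := swap_nonneg (f := fun l k => P i l * matPow P n l k * P k j)
      (fun l k => h0 k l) (fun l => h1 l) h2
    calc (∑' k, matPow P (n+1) i k * P k j)
        = ∑' k, ∑' l, P i l * matPow P n l k * P k j := by
          exact tsum_congr e1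
      _ = ∑' l, ∑' k, P i l * matPow P n l k * P k j := hc3.symm
      _ = ∑' l, P i l * matPow P (n+1) l j := by
          apply tsum_congr; intro l
          show _ = P i l * ∑' k, matPow P n l k * P k j
          rw [← tsum_mul_left]
          apply tsum_congr; intro k; ring


section FP

variable (P : E → E → ℝ) (a : E)

/-- taboo kernel: kill column `a`. -/
def tb (l l' : E) : ℝ := if l' = a then 0 else P l l'

/-- first passage probabilities: `fp (t+1) l` = P_l(hit `a` first at time t+1). -/
def fp : ℕ → E → ℝ
  | 0 => fun _ => 0
  | 1 => fun l => P l a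
  | (t+2) => fun l => ∑' l', tb P a l l' * fp (t+1) l'

variable {P a}
variable (hP : IsStochastic P)
include hP

lemma tb_nonneg (l : E) : ∀ l' : E, 0 ≤ tb P a l l' := fun l' => by
  unfold tb; split <;> [rfl; exact hP.1 l l']

lemma tb_nonneg' (l l' : E) : 0 ≤ tb P a l l' := by
  unfold tb; split <;> [rfl; exact hP.1 l l']

lemma tb_le (l l' : E) : tb P a l l' ≤ P l l' := by
  unfold tb; split <;> [exact hP.1 l l'; rfl]

lemma tb_summable (l : E) : Summable (tb P a l) :=
  Summable.of_nonneg_of_le (tb_nonneg hP l) (tb_le hP l) (rowSummable hP l)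

lemma fp_nonneg : ∀ t l, 0 ≤ fp P a t l
  | 0, l => le_refl 0
  | 1, l => hP.1 l a
  | (t+2), l => tsum_nonneg fun l' => mul_nonneg (tb_nonneg hP l l') (fp_nonneg (t+1) l')

lemma fp_le_one : ∀ t l, fp P a t l ≤ 1
  | 0, l => zero_le_one
  | 1, l => entry_le_one hP l a
  | (t+2), l => by
    show (∑' l', tb P a l l' * fp P a (t+1) l') ≤ 1
    have hle : ∀ l', tb P a l l' * fp P a (t+1) l' ≤ P l l' := fun l' => by
      calc tb P a l l' * fp P a (t+1) l' ≤ tb P a l l' * 1 :=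
            mul_le_mul_of_nonneg_left (fp_le_one (t+1) l') (tb_nonneg hP l l')
        _ = tb P a l l' := mul_one _
        _ ≤ P l l' := tb_le hP l l'
    calc (∑' l', tb P a l l' * fp P a (t+1) l') ≤ ∑' l', P l l' :=
          Summable.tsum_le_tsum hle (Summable.of_nonneg_of_le
            (fun l' => mul_nonneg (tb_nonneg hP l l') (fp_nonneg hP (t+1) l'))
            hle (rowSummable hP l)) (rowSummable hP l)
      _ = 1 := hP.2 l

lemma fp_mul_summable (l : E) (c : E → ℝ) (hc0 : ∀ l', 0 ≤ c l')
    (hc1 : ∀ l', c l' ≤ 1) : Summable (fun l' => tb P a l l' * c l') :=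
  Summable.of_nonneg_of_le (fun l' => mul_nonneg (tb_nonneg hP l l') (hc0 l'))
    (fun l' => by
      calc tb P a l l' * c l' ≤ tb P a l l' * 1 :=
            mul_le_mul_of_nonneg_left (hc1 l') (tb_nonneg hP l l')
        _ = tb P a l l' := mul_one _) (tb_summable hP l)

/-- partial sums of first-passage probabilities are at most 1. -/
lemma fp_partial_le_one : ∀ N l, (∑ t ∈ Finset.range N, fp P a (t+1) l) ≤ 1 := by
  intro N
  induction N with
  | zero => intro l; simp
  | succ N ih =>
    intro l
    rw [Finset.sum_range_succ']
    have hsw : (∑ t ∈ Finset.range N, fp P a (t+1+1) l)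
        = ∑' l', tb P a l l' * ∑ t ∈ Finset.range N, fp P a (t+1) l' := by
      have hsumm : ∀ t ∈ Finset.range N, Summable (fun l' => tb P a l l' * fp P a (t+1) l') :=
        fun t _ => fp_mul_summable hP l _ (fun l' => fp_nonneg hP (t+1) l')
          (fun l' => fp_le_one hP (t+1) l')
      have : ∀ t ∈ Finset.range N, fp P a (t+1+1) l = ∑' l', tb P a l l' * fp P a (t+1) l' :=
        fun t _ => rfl
      rw [Finset.sum_congr rfl this, ← Summable.tsum_finsetSum hsumm]
      apply tsum_congr; intro l'
      rw [Finset.mul_sum]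
    rw [hsw]
    have hF0 : ∀ l', 0 ≤ ∑ t ∈ Finset.range N, fp P a (t+1) l' :=
      fun l' => Finset.sum_nonneg fun t _ => fp_nonneg hP (t+1) l'
    have hstep : (∑' l', tb P a l l' * ∑ t ∈ Finset.range N, fp P a (t+1) l')
        ≤ ∑' l', tb P a l l' := by
      apply Summable.tsum_le_tsum (fun l' => ?_)
        (fp_mul_summable hP l _ hF0 ih) (tb_summable hP l)
      calc tb P a l l' * ∑ t ∈ Finset.range N, fp P a (t+1) l'
          ≤ tb P a l l' * 1 := mul_le_mul_of_nonneg_left (ih l') (tb_nonneg hP l l')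
        _ = tb P a l l' := mul_one _
    have hsplit : P l a + (∑' l', tb P a l l') = 1 := by
      have := Summable.tsum_eq_add_tsum_ite (rowSummable hP l) a
      rw [hP.2 l] at this
      rw [show (∑' l', tb P a l l') = ∑' l', ite (l' = a) 0 (P l l') from rfl]
      linarith
    have h1 : fp P a (0+1) l = P l a := rfl
    rw [h1]
    linarith
lemma matPow_zero_diag : matPow P 0 a a = 1 := by
  show (if a = a then (1:ℝ) else 0) = 1
  simp

omit hP in
lemma matPow_one (l : E) : matPow P 1 l a = P l a := by
  show (∑' k, matPow P 0 l k * P k a) = P l a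
  rw [tsum_eq_single l (by
    intro k hk
    show (if l = k then (1:ℝ) else 0) * P k a = 0
    simp [show ¬ l = k from fun h => hk h.symm])]
  show (if l = l then (1:ℝ) else 0) * P l a = P l a
  simp

lemma renewal : ∀ n (l : E), matPow P (n+1) l a
    = ∑ t ∈ Finset.range (n+1), fp P a (t+1) l * matPow P (n - t) a a := by
  intro n
  induction n with
  | zero =>
    intro l
    rw [matPow_one (a := a) l]
    simp only [zero_add, Finset.sum_range_one, Nat.zero_sub]
    rw [matPow_zero_diag hP]
    show P l a = fp P a 1 l * 1
    rw [mul_one]; rfl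
  | succ n ih =>
    intro l
    have hmono : ∀ l', matPow P (n+1) l' a ≤ 1 := fun l' => matPow_le_one hP (n+1) l' a
    have hnn : ∀ l', 0 ≤ matPow P (n+1) l' a := fun l' => matPow_nonneg hP (n+1) l' a
    have hsumm : Summable fun l' => P l l' * matPow P (n+1) l' a :=
      Summable.of_nonneg_of_le (fun l' => mul_nonneg (hP.1 l l') (hnn l'))
        (fun l' => by
          calc P l l' * matPow P (n+1) l' a ≤ P l l' * 1 :=
                mul_le_mul_of_nonneg_left (hmono l') (hP.1 l l')
            _ = P l l' := mul_one _) (rowSummable hP l)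
    have step1 : matPow P (n+1+1) l a
        = P l a * matPow P (n+1) a a + ∑' l', tb P a l l' * matPow P (n+1) l' a := by
      rw [matPow_left hP (n+1) l a, Summable.tsum_eq_add_tsum_ite hsumm a]
      congr 1
      apply tsum_congr; intro l'
      show ite (l' = a) 0 (P l l' * matPow P (n+1) l' a) = tb P a l l' * matPow P (n+1) l' a
      unfold tb
      split <;> simp
    have step2 : (∑' l', tb P a l l' * matPow P (n+1) l' a)
        = ∑ t ∈ Finset.range (n+1), fp P a (t+1+1) l * matPow P (n - t) a a := by
      have e1 : ∀ l', tb P a l l' * matPow P (n+1) l' a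
          = ∑ t ∈ Finset.range (n+1), tb P a l l' * fp P a (t+1) l' * matPow P (n - t) a a := by
        intro l'
        rw [ih l', Finset.mul_sum]
        exact Finset.sum_congr rfl fun t _ => by ring
      rw [tsum_congr e1]
      have hsumm2 : ∀ t ∈ Finset.range (n+1),
          Summable fun l' => tb P a l l' * fp P a (t+1) l' * matPow P (n - t) a a := by
        intro t _
        exact (fp_mul_summable hP l _ (fun l' => fp_nonneg hP (t+1) l')
          (fun l' => fp_le_one hP (t+1) l')).mul_right _
      rw [Summable.tsum_finsetSum hsumm2]
      apply Finset.sum_congr rfl; intro t _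
      rw [tsum_mul_right]
      rfl
    rw [step1, step2]
    conv_rhs => rw [Finset.sum_range_succ']
    simp only [Nat.succ_sub_succ_eq_sub, Nat.sub_zero]
    have e : fp P a (0+1) l * matPow P (n+1) a a = P l a * matPow P (n+1) a a := rfl
    rw [e]
    ring

end FP

section Renewal2

variable (P : E → E → ℝ) (pi : E → ℝ) (a : E)

def Spart (N : ℕ) (l : E) : ℝ := ∑ n ∈ Finset.range N, (matPow P n l a - pi a)

def Upart (K : ℕ) : ℝ := ∑ n ∈ Finset.range K, matPow P n a a

def Fsum (m : ℕ) (l : E) : ℝ := ∑ s ∈ Finset.range m, fp P a (s+1) l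

def Vv (N : ℕ) (l : E) : ℝ := pi a * ∑ t ∈ Finset.range N, (1 - Fsum P a (t+1) l)

variable {P pi a}
variable (hP : IsStochastic P)
include hP

lemma renewal2 : ∀ N (l : E), (∑ n ∈ Finset.range N, matPow P (n+1) l a)
    = ∑ t ∈ Finset.range N, fp P a (t+1) l * Upart P a (N - t) := by
  intro N
  induction N with
  | zero => intro l; simp
  | succ N ih =>
    intro l
    rw [Finset.sum_range_succ, ih l]
    conv_rhs => rw [Finset.sum_range_succ]
    have hU1 : Upart P a (N + 1 - N) = 1 := by
      rw [show N + 1 - N = 1 by omega]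
      unfold Upart
      rw [Finset.sum_range_one, matPow_zero_diag hP]
    have hUstep : ∀ t ∈ Finset.range N, fp P a (t+1) l * Upart P a (N + 1 - t)
        = fp P a (t+1) l * Upart P a (N - t) + fp P a (t+1) l * matPow P (N - t) a a := by
      intro t ht
      have htN : t ≤ N := Nat.le_of_lt_succ (Nat.lt_succ_of_lt (Finset.mem_range.mp ht))
      have : N + 1 - t = (N - t) + 1 := by omega
      rw [this]
      unfold Upart
      rw [Finset.sum_range_succ]
      ring
    rw [Finset.sum_congr rfl hUstep, Finset.sum_add_distrib, hU1, mul_one]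
    have hren := renewal (a := a) hP N l
    rw [Finset.sum_range_succ] at hren
    rw [Nat.sub_self, matPow_zero_diag hP, mul_one] at hren
    rw [hren]
    ring

lemma triangle_id : ∀ N (l : E), (∑ t ∈ Finset.range N, Fsum P a (t+1) l)
    = ∑ t ∈ Finset.range N, ((N - t : ℕ) : ℝ) * fp P a (t+1) l := by
  intro N
  induction N with
  | zero => intro l; simp
  | succ N ih =>
    intro l
    rw [Finset.sum_range_succ, ih l]
    conv_rhs => rw [Finset.sum_range_succ]
    rw [show N + 1 - N = 1 by omega]
    have hstep : ∀ t ∈ Finset.range N, ((N + 1 - t : ℕ) : ℝ) * fp P a (t+1) l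
        = ((N - t : ℕ) : ℝ) * fp P a (t+1) l + fp P a (t+1) l := by
      intro t ht
      have : N + 1 - t = (N - t) + 1 := by
        have := Finset.mem_range.mp ht; omega
      rw [this]
      push_cast
      ring
    rw [Finset.sum_congr rfl hstep, Finset.sum_add_distrib]
    have : Fsum P a (N+1) l = ∑ t ∈ Finset.range (N+1), fp P a (t+1) l := rfl
    rw [this, Finset.sum_range_succ]
    push_cast
    ring

/-- The master identity. -/
lemma master : ∀ N (l : E), Spart P pi a (N+1) l
    = (if l = a then 1 else 0) - pi a
      + (∑ t ∈ Finset.range N, fp P a (t+1) l * Spart P pi a (N - t) a)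
      - Vv P pi a N l := by
  intro N l
  have hUS : ∀ K : ℕ, Upart P a K = Spart P pi a K a + K * pi a := by
    intro K
    unfold Upart Spart
    rw [Finset.sum_sub_distrib]
    simp [Finset.sum_const, mul_comm]
  have h0 : Spart P pi a (N+1) l
      = (matPow P 0 l a - pi a) + ∑ n ∈ Finset.range N, (matPow P (n+1) l a - pi a) := by
    unfold Spart
    rw [Finset.sum_range_succ']
    ring
  rw [h0, Finset.sum_sub_distrib, renewal2 hP N l]
  have hrw : ∀ t ∈ Finset.range N, fp P a (t+1) l * Upart P a (N - t)
      = fp P a (t+1) l * Spart P pi a (N - t) a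
        + ((N - t : ℕ) : ℝ) * fp P a (t+1) l * pi a := by
    intro t _
    rw [hUS (N - t)]
    ring
  rw [Finset.sum_congr rfl hrw, Finset.sum_add_distrib]
  have htr : (∑ t ∈ Finset.range N, ((N - t : ℕ) : ℝ) * fp P a (t+1) l * pi a)
      = pi a * ∑ t ∈ Finset.range N, Fsum P a (t+1) l := by
    rw [triangle_id hP N l, Finset.mul_sum]
    exact Finset.sum_congr rfl fun t _ => by ring
  rw [htr]
  have hm0 : matPow P 0 l a = if l = a then 1 else 0 := rfl
  rw [hm0]
  unfold Vv
  rw [Finset.sum_sub_distrib]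
  simp only [Finset.sum_const, Finset.card_range, nsmul_eq_mul, mul_one]
  ring

end Renewal2

section Bounds

variable {P : E → E → ℝ} {pi : E → ℝ} {a : E} {Dl : E → ℝ} {M C : ℝ}
variable (hP : IsStochastic P)
variable (hconv : ∀ l, Tendsto (fun N => Spart P pi a N l) atTop (nhds (Dl l)))
variable (hM : ∀ l, |Dl l| ≤ M)
variable (hC : ∀ N, |Spart P pi a N a| ≤ C)
variable (hpia0 : 0 ≤ pi a) (hpia1 : pi a ≤ 1)

include hP in
lemma fp_summable_t (l : E) : Summable (fun t : ℕ => fp P a (t+1) l) :=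
  summable_of_sum_range_le (fun t => fp_nonneg hP (t+1) l) (fun N => fp_partial_le_one hP N l)

include hP in
lemma Finf_nonneg (l : E) : 0 ≤ ∑' t : ℕ, fp P a (t+1) l :=
  tsum_nonneg fun t => fp_nonneg hP (t+1) l

include hP in
lemma Finf_le_one (l : E) : (∑' t : ℕ, fp P a (t+1) l) ≤ 1 :=
  Real.tsum_le_of_sum_range_le (fun t => fp_nonneg hP (t+1) l)
    (fun N => fp_partial_le_one hP N l)

include hP hconv hC in
lemma convterm_tendsto (l : E) :
    Tendsto (fun N => ∑ t ∈ Finset.range N, fp P a (t+1) l * Spart P pi a (N - t) a)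
      atTop (nhds ((∑' t : ℕ, fp P a (t+1) l) * Dl a)) := by
  have hC0 : 0 ≤ C := le_trans (abs_nonneg _) (hC 0)
  set f : ℕ → ℕ → ℝ := fun N t =>
    if t < N then fp P a (t+1) l * Spart P pi a (N - t) a else 0 with hf
  have hfin : ∀ N, (∑ t ∈ Finset.range N, fp P a (t+1) l * Spart P pi a (N - t) a)
      = ∑' t : ℕ, f N t := by
    intro N
    rw [tsum_eq_sum (s := Finset.range N) (by
      intro t ht
      simp only [hf]
      rw [if_neg (by simpa using ht)])]
    apply Finset.sum_congr rfl
    intro t ht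
    simp only [hf]
    rw [if_pos (Finset.mem_range.mp ht)]
  have hlim : (∑' t : ℕ, fp P a (t+1) l) * Dl a = ∑' t : ℕ, fp P a (t+1) l * Dl a := by
    rw [tsum_mul_right]
  rw [hlim]
  have := tendsto_tsum_of_dominated_convergence (𝓕 := atTop)
    (f := f) (g := fun t => fp P a (t+1) l * Dl a)
    (bound := fun t => fp P a (t+1) l * C)
    (((fp_summable_t hP l)).mul_right C)
    (by
      intro t
      have h1 : Tendsto (fun N : ℕ => N - t) atTop atTop := tendsto_sub_atTop_nat t
      have h2 : Tendsto (fun N : ℕ => Spart P pi a (N - t) a) atTop (nhds (Dl a)) :=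
        (hconv a).comp h1
      have h3 : Tendsto (fun N : ℕ => fp P a (t+1) l * Spart P pi a (N - t) a)
          atTop (nhds (fp P a (t+1) l * Dl a)) := h2.const_mul _
      apply h3.congr'
      filter_upwards [eventually_gt_atTop t] with N hN
      simp only [hf]
      rw [if_pos hN])
    (by
      filter_upwards with N
      intro t
      simp only [hf]
      split
      · rw [Real.norm_eq_abs, abs_mul, abs_of_nonneg (fp_nonneg hP (t+1) l)]
        exact mul_le_mul_of_nonneg_left (hC _) (fp_nonneg hP (t+1) l)
      · rw [norm_zero]
        exact mul_nonneg (fp_nonneg hP (t+1) l) hC0)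
  apply this.congr
  intro N
  exact (hfin N).symm

include hP hconv hC in
lemma Vv_tendsto (l : E) :
    Tendsto (fun N => Vv P pi a N l) atTop
      (nhds ((if l = a then 1 else 0) - pi a
        + (∑' t : ℕ, fp P a (t+1) l) * Dl a - Dl l)) := by
  have h1 : ∀ N, Vv P pi a N l
      = (if l = a then 1 else 0) - pi a
        + (∑ t ∈ Finset.range N, fp P a (t+1) l * Spart P pi a (N - t) a)
        - Spart P pi a (N+1) l := by
    intro N
    have := master (pi := pi) (a := a) hP N l
    linarith [this]
  have h2 : Tendsto (fun N : ℕ => Spart P pi a (N+1) l) atTop (nhds (Dl l)) :=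
    (hconv l).comp (tendsto_add_atTop_nat 1)
  have h3 := ((convterm_tendsto hP hconv hC l).const_add
    ((if l = a then (1:ℝ) else 0) - pi a)).sub h2
  apply h3.congr
  intro N
  rw [← h1 N]

include hP hconv hM hC hpia0 hpia1 in
lemma Vv_le (N : ℕ) (l : E) : Vv P pi a N l ≤ 1 + 2 * M := by
  have hmono : Monotone (fun N => Vv P pi a N l) := by
    apply monotone_nat_of_le_succ
    intro n
    unfold Vv
    apply mul_le_mul_of_nonneg_left _ hpia0
    rw [Finset.sum_range_succ]
    have : 0 ≤ 1 - Fsum P a (n+1) l := by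
      have := fp_partial_le_one (a := a) hP (n+1) l
      unfold Fsum
      linarith
    linarith
  have hle : Vv P pi a N l ≤ (if l = a then (1:ℝ) else 0) - pi a
      + (∑' t : ℕ, fp P a (t+1) l) * Dl a - Dl l := by
    apply ge_of_tendsto (Vv_tendsto hP hconv hC l)
    filter_upwards [eventually_ge_atTop N] with N' hN'
    exact hmono hN'
  refine le_trans hle ?_
  have e1 : (if l = a then (1:ℝ) else 0) - pi a ≤ 1 := by
    split <;> linarith
  have e2 : (∑' t : ℕ, fp P a (t+1) l) * Dl a ≤ M := by
    calc (∑' t : ℕ, fp P a (t+1) l) * Dl a ≤ (∑' t : ℕ, fp P a (t+1) l) * |Dl a| :=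
          mul_le_mul_of_nonneg_left (le_abs_self _) (Finf_nonneg hP l)
      _ ≤ 1 * |Dl a| := mul_le_mul_of_nonneg_right (Finf_le_one hP l) (abs_nonneg _)
      _ = |Dl a| := one_mul _
      _ ≤ M := hM a
  have e3 : -Dl l ≤ M := by
    have := hM l
    have := neg_abs_le (Dl l)
    linarith
  linarith

include hP hconv hM hC hpia0 hpia1 in
/-- The key uniform bound on partial sums. -/
lemma Spart_unif_bdd (N : ℕ) (l : E) : |Spart P pi a N l| ≤ 2 + C + 2 * M := by
  have hC0 : 0 ≤ C := le_trans (abs_nonneg _) (hC 0)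
  have hM0 : 0 ≤ M := le_trans (abs_nonneg _) (hM a)
  cases N with
  | zero =>
    unfold Spart
    simp only [Finset.range_zero, Finset.sum_empty, abs_zero]
    linarith
  | succ N =>
    rw [master hP N l]
    have hconvbd : |∑ t ∈ Finset.range N, fp P a (t+1) l * Spart P pi a (N - t) a| ≤ C := by
      calc |∑ t ∈ Finset.range N, fp P a (t+1) l * Spart P pi a (N - t) a|
          ≤ ∑ t ∈ Finset.range N, |fp P a (t+1) l * Spart P pi a (N - t) a| :=
            Finset.abs_sum_le_sum_abs _ _
        _ ≤ ∑ t ∈ Finset.range N, fp P a (t+1) l * C := by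
            apply Finset.sum_le_sum
            intro t _
            rw [abs_mul, abs_of_nonneg (fp_nonneg hP (t+1) l)]
            exact mul_le_mul_of_nonneg_left (hC _) (fp_nonneg hP (t+1) l)
        _ = (∑ t ∈ Finset.range N, fp P a (t+1) l) * C := by rw [Finset.sum_mul]
        _ ≤ 1 * C := mul_le_mul_of_nonneg_right (fp_partial_le_one hP N l) hC0
        _ = C := one_mul _
    have hVnn : 0 ≤ Vv P pi a N l := by
      unfold Vv
      apply mul_nonneg hpia0
      apply Finset.sum_nonneg
      intro t _
      have := fp_partial_le_one (a := a) hP (t+1) l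
      unfold Fsum
      linarith
    have hVle := Vv_le hP hconv hM hC hpia0 hpia1 N l
    have e1 : |(if l = a then (1:ℝ) else 0) - pi a| ≤ 1 := by
      rw [abs_le]; constructor <;> [split;split] <;> linarith
    rw [abs_le] at *
    constructor <;> [skip; skip] <;>
      cases' e1 with e1a e1b <;> cases' hconvbd with c1 c2 <;> nlinarith

end Bounds

section Crux

variable {P : E → E → ℝ} {pi : E → ℝ} {a : E} {Dl : E → ℝ} {M C : ℝ}
variable (hP : IsStochastic P)
variable (hconv : ∀ l, Tendsto (fun N => Spart P pi a N l) atTop (nhds (Dl l)))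
variable (hM : ∀ l, |Dl l| ≤ M)
variable (hC : ∀ N, |Spart P pi a N a| ≤ C)
variable (hpia0 : 0 ≤ pi a) (hpia1 : pi a ≤ 1)

include hP hM in
lemma PD_summable (k : E) : Summable fun l => P k l * Dl l := by
  apply Summable.of_abs
  apply Summable.of_nonneg_of_le (fun l => abs_nonneg _) (fun l => ?_)
    ((rowSummable hP k).mul_right M)
  rw [abs_mul, abs_of_nonneg (hP.1 k l)]
  exact mul_le_mul_of_nonneg_left (hM l) (hP.1 k l)

include hP in
lemma PS_eq (k : E) (N : ℕ) : (∑' l, P k l * Spart P pi a N l)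
    = Spart P pi a (N+1) k - ((if k = a then 1 else 0) - pi a) := by
  have hsummn : ∀ n : ℕ, Summable fun l => P k l * (matPow P n l a - pi a) := by
    intro n
    have h1 : Summable fun l => P k l * matPow P n l a := by
      apply Summable.of_nonneg_of_le
        (fun l => mul_nonneg (hP.1 k l) (matPow_nonneg hP n l a))
        (fun l => by
          calc P k l * matPow P n l a ≤ P k l * 1 :=
                mul_le_mul_of_nonneg_left (matPow_le_one hP n l a) (hP.1 k l)
            _ = P k l := mul_one _) (rowSummable hP k)
    have h2 : Summable fun l => P k l * pi a := (rowSummable hP k).mul_right _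
    have := h1.sub h2
    apply this.congr
    intro l; ring
  have hterm : ∀ n : ℕ, (∑' l, P k l * (matPow P n l a - pi a))
      = matPow P (n+1) k a - pi a := by
    intro n
    have h1 : Summable fun l => P k l * matPow P n l a := by
      apply Summable.of_nonneg_of_le
        (fun l => mul_nonneg (hP.1 k l) (matPow_nonneg hP n l a))
        (fun l => by
          calc P k l * matPow P n l a ≤ P k l * 1 :=
                mul_le_mul_of_nonneg_left (matPow_le_one hP n l a) (hP.1 k l)
            _ = P k l := mul_one _) (rowSummable hP k)
    have h2 : Summable fun l => P k l * pi a := (rowSummable hP k).mul_right _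
    have e : (fun l => P k l * (matPow P n l a - pi a))
        = fun l => P k l * matPow P n l a - P k l * pi a := funext fun l => by ring
    rw [e, Summable.tsum_sub h1 h2, tsum_mul_right, hP.2 k, one_mul, matPow_left hP n k a]
  calc (∑' l, P k l * Spart P pi a N l)
      = ∑' l, ∑ n ∈ Finset.range N, P k l * (matPow P n l a - pi a) := by
        apply tsum_congr; intro l
        unfold Spart
        rw [Finset.mul_sum]
    _ = ∑ n ∈ Finset.range N, ∑' l, P k l * (matPow P n l a - pi a) :=
        Summable.tsum_finsetSum fun n _ => hsummn n
    _ = ∑ n ∈ Finset.range N, (matPow P (n+1) k a - pi a) :=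
        Finset.sum_congr rfl fun n _ => hterm n
    _ = Spart P pi a (N+1) k - ((if k = a then 1 else 0) - pi a) := by
        unfold Spart
        rw [Finset.sum_range_succ']
        have : matPow P 0 k a = if k = a then 1 else 0 := rfl
        rw [this]
        ring

include hP hconv hM hC hpia0 hpia1 in
/-- Poisson equation for the deviation column. -/
lemma crux (k : E) : (∑' l, P k l * Dl l)
    = Dl k - (if k = a then 1 else 0) + pi a := by
  set G := 2 + C + 2 * M with hG
  have hlim1 : Tendsto (fun N => ∑' l, P k l * Spart P pi a N l) atTop
      (nhds (∑' l, P k l * Dl l)) := by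
    apply tendsto_tsum_of_dominated_convergence (bound := fun l => P k l * G)
      ((rowSummable hP k).mul_right G)
      (fun l => (hconv l).const_mul _)
    filter_upwards with N l
    rw [Real.norm_eq_abs, abs_mul, abs_of_nonneg (hP.1 k l)]
    exact mul_le_mul_of_nonneg_left
      (Spart_unif_bdd hP hconv hM hC hpia0 hpia1 N l) (hP.1 k l)
  have hlim2 : Tendsto (fun N => ∑' l, P k l * Spart P pi a N l) atTop
      (nhds (Dl k - ((if k = a then 1 else 0) - pi a))) := by
    have h2 : Tendsto (fun N : ℕ => Spart P pi a (N+1) k) atTop (nhds (Dl k)) :=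
      (hconv k).comp (tendsto_add_atTop_nat 1)
    have := h2.sub (tendsto_const_nhds (x := (if k = a then (1:ℝ) else 0) - pi a))
    apply this.congr
    intro N
    rw [PS_eq hP k N]
  have := tendsto_nhds_unique hlim1 hlim2
  rw [this]; ring

end Crux

/-- Signed Fubini with nonnegative dominating function. -/
lemma tsum_swap_of_abs_le {α β : Type*} {f g : α → β → ℝ}
    (hg0 : ∀ a b, 0 ≤ g a b) (hga : ∀ a, Summable (g a))
    (hgs : Summable fun a => ∑' b, g a b) (hfg : ∀ a b, |f a b| ≤ g a b) :
    (∀ a, Summable (f a)) ∧ (∀ b, Summable fun a => f a b) ∧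
      (Summable fun b => ∑' a, f a b) ∧
      ∑' a, ∑' b, f a b = ∑' b, ∑' a, f a b := by
  have hgprod : Summable (fun p : α × β => g p.1 p.2) := by
    rw [summable_prod_of_nonneg (fun p => hg0 p.1 p.2)]
    exact ⟨hga, hgs⟩
  have hgcols := (summable_prod_of_nonneg (f := fun p : β × α => g p.2 p.1)
    (fun p => hg0 p.2 p.1)).mp hgprod.prod_symm
  have hfabs : Summable (fun p : α × β => |f p.1 p.2|) :=
    Summable.of_nonneg_of_le (fun p => abs_nonneg _) (fun p => hfg p.1 p.2) hgprod
  have hfprod : Summable (fun p : α × β => f p.1 p.2) := hfabs.of_abs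
  have h1 : ∀ a, Summable (f a) := fun a =>
    Summable.of_abs (Summable.of_nonneg_of_le (fun b => abs_nonneg _) (hfg a) (hga a))
  have h2 : ∀ b, Summable fun a => f a b := fun b =>
    Summable.of_abs (Summable.of_nonneg_of_le (fun a => abs_nonneg _)
      (fun a => hfg a b) (hgcols.1 b))
  refine ⟨h1, h2, ?_, (Summable.tsum_comm' hfprod h1 h2).symm⟩
  apply Summable.of_abs
  apply Summable.of_nonneg_of_le (fun b => abs_nonneg _) (fun b => ?_) hgcols.2
  calc |∑' a, f a b| ≤ ∑' a, |f a b| := by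
        simpa using norm_tsum_le_tsum_norm (f := fun a => f a b)
          (Summable.of_nonneg_of_le (fun a => abs_nonneg _) (fun a => hfg a b) (hgcols.1 b))
    _ ≤ ∑' a, g a b := Summable.tsum_le_tsum (fun a => hfg a b)
        (Summable.of_nonneg_of_le (fun a => abs_nonneg _) (fun a => hfg a b) (hgcols.1 b))
        (hgcols.1 b)

end Stmt5Aux

/-- if the deviation matrix D exists and is bounded, then
ν(j) − π(j) = ∑_i ∑_k ν(i)(P̃(i,k) − P(i,k))D(k,j). -/
theorem stmt5 {E : Type*} [Countable E] (P Pt : E → E → ℝ) (pi nu : E → ℝ)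
    (D : E → E → ℝ)
    (hP : IsStochastic P) (hPt : IsStochastic Pt)
    (hPirr : IsIrred P) (hPtirr : IsIrred Pt)
    (hpi : IsProbVec pi) (hnu : IsProbVec nu)
    (hpiinv : InvariantFor pi P) (hnuinv : InvariantFor nu Pt)
    (hD : ∀ i j, Filter.Tendsto
      (fun N => ∑ n ∈ Finset.range N, (matPow P n i j - pi j))
      Filter.atTop (nhds (D i j)))
    (hDbd : (⨆ i, ∑' j, ENNReal.ofReal |D i j|) < ⊤) :
    ∀ j, nu j - pi j = ∑' i, ∑' k, nu i * (Pt i k - P i k) * D k j := by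
  intro a
  -- the uniform entrywise bound on D
  set Ssup := ⨆ i, ∑' j, ENNReal.ofReal |D i j| with hSsup
  set M := Ssup.toReal with hMdef
  have hM : ∀ i j, |D i j| ≤ M := by
    intro i j
    have h1 : ENNReal.ofReal |D i j| ≤ Ssup := by
      refine le_trans ?_ (le_iSup (fun i => ∑' j, ENNReal.ofReal |D i j|) i)
      exact ENNReal.le_tsum j
    calc |D i j| ≤ (ENNReal.ofReal |D i j|).toReal := by
          rw [ENNReal.toReal_ofReal (abs_nonneg _)]
      _ ≤ M := ENNReal.toReal_mono hDbd.ne h1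
  have hM0 : 0 ≤ M := ENNReal.toReal_nonneg
  -- specialization to the column a
  have hconv : ∀ l, Tendsto (fun N => Stmt5Aux.Spart P pi a N l) atTop (nhds (D l a)) :=
    fun l => hD l a
  have hMa : ∀ l, |D l a| ≤ M := fun l => hM l a
  -- bound on the diagonal partial sums
  obtain ⟨C, hC⟩ : ∃ C, ∀ N, |Stmt5Aux.Spart P pi a N a| ≤ C := by
    have hb : BddAbove (Set.range fun N => |Stmt5Aux.Spart P pi a N a|) :=
      Filter.Tendsto.bddAbove_range ((hconv a).abs)
    obtain ⟨C, hC⟩ := hb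
    exact ⟨C, fun N => hC (Set.mem_range_self N)⟩
  -- pi a bounds
  have hpisummable : Summable pi := by
    by_contra h
    have := tsum_eq_zero_of_not_summable h
    rw [hpi.2] at this; norm_num at this
  have hpia0 : 0 ≤ pi a := hpi.1 a
  have hpia1 : pi a ≤ 1 := by
    rw [← hpi.2]
    exact Summable.le_tsum hpisummable a fun k _ => hpi.1 k
  have hnusummable : Summable nu := by
    by_contra h
    have := tsum_eq_zero_of_not_summable h
    rw [hnu.2] at this; norm_num at this
  -- Poisson equation
  have hpoisson : ∀ k, (∑' l, P k l * D l a)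
      = D k a - (if k = a then 1 else 0) + pi a :=
    fun k => Stmt5Aux.crux hP hconv hMa hC hpia0 hpia1 k
  -- summabilities
  have hPDsum : ∀ i, Summable fun k => P i k * D k a :=
    fun i => Stmt5Aux.PD_summable hP hMa i
  have hPtDsum : ∀ i, Summable fun k => Pt i k * D k a :=
    fun i => Stmt5Aux.PD_summable hPt hMa i
  have hPtDbd : ∀ i, |∑' k, Pt i k * D k a| ≤ M := by
    intro i
    calc |∑' k, Pt i k * D k a| ≤ ∑' k, |Pt i k * D k a| := by
          simpa only [Real.norm_eq_abs] using
            norm_tsum_le_tsum_norm (f := fun k => Pt i k * D k a) ((hPtDsum i).abs)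
      _ ≤ ∑' k, Pt i k * M := by
          apply Summable.tsum_le_tsum (fun k => ?_) (hPtDsum i).abs
            ((Stmt5Aux.rowSummable hPt i).mul_right M)
          rw [abs_mul, abs_of_nonneg (hPt.1 i k)]
          exact mul_le_mul_of_nonneg_left (hMa k) (hPt.1 i k)
      _ = M := by rw [tsum_mul_right, hPt.2 i, one_mul]
  -- rewrite inner sums
  have hinner : ∀ i, (∑' k, nu i * (Pt i k - P i k) * D k a)
      = nu i * (∑' k, Pt i k * D k a) - nu i * (∑' k, P i k * D k a) := by
    intro i
    have e : (fun k => nu i * (Pt i k - P i k) * D k a)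
        = fun k => nu i * (Pt i k * D k a) - nu i * (P i k * D k a) :=
      funext fun k => by ring
    rw [e, Summable.tsum_sub ((hPtDsum i).mul_left _) ((hPDsum i).mul_left _),
      tsum_mul_left, tsum_mul_left]
  rw [tsum_congr hinner]
  -- split the outer sum
  have hsum1 : Summable fun i => nu i * (∑' k, Pt i k * D k a) := by
    apply Summable.of_abs
    apply Summable.of_nonneg_of_le (fun i => abs_nonneg _) (fun i => ?_)
      (hnusummable.mul_right M)
    rw [abs_mul, abs_of_nonneg (hnu.1 i)]
    exact mul_le_mul_of_nonneg_left (hPtDbd i) (hnu.1 i)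
  have hsum2 : Summable fun i => nu i * (∑' k, P i k * D k a) := by
    apply Summable.of_abs
    apply Summable.of_nonneg_of_le (fun i => abs_nonneg _) (fun i => ?_)
      (hnusummable.mul_right (M + 1 + 1))
    rw [abs_mul, abs_of_nonneg (hnu.1 i)]
    apply mul_le_mul_of_nonneg_left _ (hnu.1 i)
    rw [hpoisson i]
    have habs := abs_le.mp (hMa i)
    rw [abs_le]
    constructor <;> split <;> cases' habs with hl hr <;> nlinarith [hpia0, hpia1]
  rw [Summable.tsum_sub hsum1 hsum2]
  -- first term: Fubini and invariance of nu for Pt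
  have hfub := Stmt5Aux.tsum_swap_of_abs_le
    (f := fun i k => nu i * (Pt i k * D k a))
    (g := fun i k => nu i * Pt i k * M)
    (fun i k => by
      show (0:ℝ) ≤ nu i * Pt i k * M
      have := hnu.1 i; have := hPt.1 i k; positivity)
    (fun i => by
      show Summable fun k => nu i * Pt i k * M
      have e : (fun k => nu i * Pt i k * M) = fun k => nu i * (Pt i k * M) :=
        funext fun k => by ring
      rw [e]
      exact ((Stmt5Aux.rowSummable hPt i).mul_right M).mul_left _)
    (by
      show Summable fun i => ∑' k, nu i * Pt i k * M
      have e : (fun i => ∑' k, nu i * Pt i k * M) = fun i => nu i * M := by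
        funext i
        have e2 : (fun k => nu i * Pt i k * M) = fun k => (nu i * M) * Pt i k :=
          funext fun k => by ring
        rw [e2, tsum_mul_left, hPt.2 i, mul_one]
      rw [e]
      exact hnusummable.mul_right M)
    (fun i k => by
      show |nu i * (Pt i k * D k a)| ≤ nu i * Pt i k * M
      rw [abs_mul, abs_mul, abs_of_nonneg (hnu.1 i), abs_of_nonneg (hPt.1 i k), mul_assoc]
      apply mul_le_mul_of_nonneg_left _ (hnu.1 i)
      exact mul_le_mul_of_nonneg_left (hMa k) (hPt.1 i k))
  obtain ⟨hf1, hf2, hf3, hfswap⟩ := hfub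
  have hterm1 : (∑' i, nu i * (∑' k, Pt i k * D k a)) = ∑' k, nu k * D k a := by
    have e1 : (fun i => nu i * (∑' k, Pt i k * D k a))
        = fun i => ∑' k, nu i * (Pt i k * D k a) := by
      funext i
      rw [tsum_mul_left]
    rw [e1, hfswap]
    apply tsum_congr; intro k
    have e2 : (fun i => nu i * (Pt i k * D k a)) = fun i => (nu i * Pt i k) * D k a :=
      funext fun i => by ring
    rw [e2, tsum_mul_right, (hnuinv k).tsum_eq]
  -- second term: Poisson equation
  have hterm2 : (∑' i, nu i * (∑' k, P i k * D k a))
      = (∑' i, nu i * D i a) - nu a + pi a := by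
    have e1 : (fun i => nu i * (∑' k, P i k * D k a))
        = fun i => nu i * D i a - nu i * (if i = a then 1 else 0) + nu i * pi a := by
      funext i
      rw [hpoisson i]
      ring
    have s1 : Summable fun i => nu i * D i a := by
      apply Summable.of_abs
      apply Summable.of_nonneg_of_le (fun i => abs_nonneg _) (fun i => ?_)
        (hnusummable.mul_right M)
      rw [abs_mul, abs_of_nonneg (hnu.1 i)]
      exact mul_le_mul_of_nonneg_left (hMa i) (hnu.1 i)
    have s2 : Summable fun i => nu i * (if i = a then (1:ℝ) else 0) := by
      apply summable_of_ne_finset_zero (s := {a})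
      intro i hi
      simp only [Finset.mem_singleton] at hi
      simp [hi]
    have s3 : Summable fun i => nu i * pi a := hnusummable.mul_right _
    rw [e1, Summable.tsum_add (s1.sub s2) s3, Summable.tsum_sub s1 s2, tsum_mul_right, hnu.2, one_mul]
    have e2 : (∑' i, nu i * (if i = a then (1:ℝ) else 0)) = nu a := by
      rw [tsum_eq_single a (fun i hi => by simp [hi])]
      simp
    rw [e2]
  rw [hterm1, hterm2]
  ring

end
end

section
/- Let E be a countable set, P an irreducible stochastic matrix on E with invariant probability vector π, i₀ ∈ E, and suppose P satisfies the drift condition D1(V,{i₀}) with a bounded nonnegative function V. Define T(i,j) = P(i,j) for i ≠ i₀ and T(i₀,j) = 0 for all j, and let T^n denote matrix powers. Then for every i,j the series S(i,j) = ∑_{n=0}^∞ T^n(i,j) converges, and sup_i ∑_j | S(i,j) − (∑_k S(i,k)) π(j) | ≤ 2 (sup_i V(i))². -/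
open scoped Classical ENNReal NNReal
open Filter MeasureTheory

noncomputable section

variable {E : Type*}

lemma stmt7_fubini {α β : Type*} (F : α → β → ℝ) (hnn : ∀ a b, 0 ≤ F a b)
    (hslice : ∀ a, Summable (F a)) (hmarg : Summable fun a => ∑' b, F a b) :
    Summable (fun b => ∑' a, F a b) ∧ ∑' b, ∑' a, F a b = ∑' a, ∑' b, F a b := by
  have hF : Summable (fun p : α × β => F p.1 p.2) :=
    (summable_prod_of_nonneg (fun p => hnn p.1 p.2)).mpr ⟨hslice, hmarg⟩
  have hsw : Summable (fun p : β × α => F p.2 p.1) := hF.prod_symm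
  have h2 : Summable fun b => ∑' a, F a b :=
    ((summable_prod_of_nonneg (fun p : β × α => hnn p.2 p.1)).mp hsw).2
  exact ⟨h2, Summable.tsum_comm (f := F) hF⟩

/-- under D1(V,{i₀}), S = ∑_n T^n exists and
sup_i ∑_j |S(i,j) − (∑_k S(i,k))π(j)| ≤ 2(sup V)². -/
theorem stmt7 {E : Type*} [Countable E] (P : E → E → ℝ) (pi : E → ℝ) (i₀ : E) (V : E → ℝ)
    (hP : IsStochastic P) (hPirr : IsIrred P)
    (hpi : IsProbVec pi) (hpiinv : InvariantFor pi P)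
    (hVnn : ∀ i, 0 ≤ V i) (hVbd : BddAbove (Set.range V)) (hV0 : V i₀ = 0)
    (hdrift : ∀ i, i ≠ i₀ → ∑' j, P i j * V j ≤ V i - 1) :
    (∀ i j, Summable fun n =>
        matPow (fun a b => if a = i₀ then (0 : ℝ) else P a b) n i j) ∧
      (⨆ i, ∑' j, ENNReal.ofReal
          |(∑' n, matPow (fun a b => if a = i₀ then (0 : ℝ) else P a b) n i j) -
            (∑' k, ∑' n, matPow (fun a b => if a = i₀ then (0 : ℝ) else P a b) n i k) *
              pi j|) ≤
        ENNReal.ofReal (2 * (⨆ i, V i) ^ 2) := by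
  obtain ⟨hPnn, hProw⟩ := hP
  obtain ⟨hπnn, hπtot⟩ := hpi
  set M := ⨆ i, V i with hMdef
  have hVM : ∀ i, V i ≤ M := fun i => le_ciSup hVbd i
  have hM0 : (0 : ℝ) ≤ M := hV0 ▸ hVM i₀
  have hVge1 : ∀ i, i ≠ i₀ → 1 ≤ V i := by
    intro i hi
    have h1 := hdrift i hi
    have h2 : (0 : ℝ) ≤ ∑' j, P i j * V j :=
      tsum_nonneg fun j => mul_nonneg (hPnn i j) (hVnn j)
    linarith
  set T : E → E → ℝ := fun a b => if a = i₀ then (0 : ℝ) else P a b with hT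
  have hTnn : ∀ a b, 0 ≤ T a b := by
    intro a b; by_cases h : a = i₀ <;> simp [hT, h, hPnn a b]
  have hProwS : ∀ a, Summable (P a) := by
    intro a; by_contra h
    have h2 := hProw a
    rw [tsum_eq_zero_of_not_summable h] at h2; norm_num at h2
  have hTrowS : ∀ a, Summable (T a) := by
    intro a; by_cases h : a = i₀
    · simpa [hT, h] using summable_zero
    · simpa [hT, h] using hProwS a
  have hTrs : ∀ a, ∑' j, T a j = if a = i₀ then (0 : ℝ) else 1 := by
    intro a; by_cases h : a = i₀ <;> simp [hT, h, hProw a]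
  have hTrs1 : ∀ a, ∑' j, T a j ≤ 1 := by
    intro a; rw [hTrs]; split <;> norm_num
  -- weighted row sums of T
  have hrowW : ∀ (W : E → ℝ) (C : ℝ), 0 ≤ C → (∀ j, 0 ≤ W j) → (∀ j, W j ≤ C) → ∀ a,
      Summable (fun j => T a j * W j) ∧ (0 ≤ ∑' j, T a j * W j) ∧ ∑' j, T a j * W j ≤ C := by
    intro W C hC hWnn hWC a
    have h1 : Summable fun j => T a j * C := (hTrowS a).mul_right C
    have hs : Summable (fun j => T a j * W j) :=
      Summable.of_nonneg_of_le (fun j => mul_nonneg (hTnn a j) (hWnn j))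
        (fun j => mul_le_mul_of_nonneg_left (hWC j) (hTnn a j)) h1
    refine ⟨hs, tsum_nonneg fun j => mul_nonneg (hTnn a j) (hWnn j), ?_⟩
    calc ∑' j, T a j * W j ≤ ∑' j, T a j * C :=
          Summable.tsum_le_tsum (fun j => mul_le_mul_of_nonneg_left (hWC j) (hTnn a j)) hs h1
      _ = (∑' j, T a j) * C := tsum_mul_right
      _ ≤ 1 * C := mul_le_mul_of_nonneg_right (hTrs1 a) hC
      _ = C := one_mul C
  -- fubini step
  have hstep : ∀ (f : E → ℝ), (∀ k, 0 ≤ f k) → Summable f →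
      ∀ (W : E → ℝ) (C : ℝ), 0 ≤ C → (∀ j, 0 ≤ W j) → (∀ j, W j ≤ C) →
      Summable (fun j => (∑' k, f k * T k j) * W j) ∧
        ∑' j, (∑' k, f k * T k j) * W j = ∑' k, f k * (∑' j, T k j * W j) := by
    intro f hfnn hfs W C hC hWnn hWC
    set F : E → E → ℝ := fun k j => f k * (T k j * W j) with hF
    have hFnn : ∀ k j, 0 ≤ F k j :=
      fun k j => mul_nonneg (hfnn k) (mul_nonneg (hTnn k j) (hWnn j))
    have hslice : ∀ k, Summable (F k) := fun k => ((hrowW W C hC hWnn hWC k).1).mul_left (f k)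
    have hsliceval : ∀ k, ∑' j, F k j = f k * (∑' j, T k j * W j) := fun k => tsum_mul_left
    have hmarg : Summable fun k => ∑' j, F k j := by
      rw [summable_congr hsliceval]
      exact Summable.of_nonneg_of_le
        (fun k => mul_nonneg (hfnn k) (hrowW W C hC hWnn hWC k).2.1)
        (fun k => mul_le_mul_of_nonneg_left (hrowW W C hC hWnn hWC k).2.2 (hfnn k))
        (hfs.mul_right C)
    obtain ⟨hcolsum, hcomm⟩ := stmt7_fubini F hFnn hslice hmarg
    have hcol : ∀ j, ∑' k, F k j = (∑' k, f k * T k j) * W j := by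
      intro j
      have e : (fun k => F k j) = fun k => (f k * T k j) * W j := by
        funext k; simp [hF, mul_assoc]
      rw [e, tsum_mul_right]
    constructor
    · exact (summable_congr hcol).mp hcolsum
    · calc ∑' j, (∑' k, f k * T k j) * W j = ∑' j, ∑' k, F k j :=
            tsum_congr fun j => (hcol j).symm
        _ = ∑' k, ∑' j, F k j := hcomm
        _ = ∑' k, f k * (∑' j, T k j * W j) := tsum_congr hsliceval
  -- matPow basic facts
  have key : ∀ n (i : E), (∀ j, 0 ≤ matPow T n i j) ∧ Summable (matPow T n i) := by
    intro n
    induction n with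
    | zero =>
      intro i
      constructor
      · intro j; show (0:ℝ) ≤ if i = j then 1 else 0; split <;> norm_num
      · apply summable_of_ne_finset_zero (s := {i})
        intro j hj
        have hij : i ≠ j := fun h => hj (by simp [h])
        show (if i = j then (1:ℝ) else 0) = 0
        simp [hij]
    | succ n ih =>
      intro i
      obtain ⟨hnn, hsum⟩ := ih i
      have h1 := (hstep (matPow T n i) hnn hsum (fun _ => (1:ℝ)) 1 zero_le_one
        (fun _ => zero_le_one) (fun _ => le_rfl)).1
      constructor
      · intro j
        show (0:ℝ) ≤ ∑' k, matPow T n i k * T k j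
        exact tsum_nonneg fun k => mul_nonneg (hnn k) (hTnn k j)
      · have e : matPow T (n+1) i = fun j => (∑' k, matPow T n i k * T k j) * (1:ℝ) := by
          funext j; rw [mul_one]; rfl
        rw [e]; exact h1
  have hmatnn : ∀ n (i : E), ∀ j, 0 ≤ matPow T n i j := fun n i => (key n i).1
  have hmatS : ∀ n (i : E), Summable (matPow T n i) := fun n i => (key n i).2
  have hVsum : ∀ n (i : E), Summable (fun j => matPow T n i j * V j) := by
    intro n i
    exact Summable.of_nonneg_of_le
      (fun j => mul_nonneg (hmatnn n i j) (hVnn j))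
      (fun j => mul_le_mul_of_nonneg_left (hVM j) (hmatnn n i j))
      ((hmatS n i).mul_right M)
  have hiteS : ∀ n (i : E), Summable (fun k => matPow T n i k * (if k = i₀ then (0:ℝ) else 1)) := by
    intro n i
    apply Summable.of_nonneg_of_le
      (fun k => mul_nonneg (hmatnn n i k) (by split <;> norm_num))
      (fun k => ?_) ((hmatS n i).mul_right 1)
    exact mul_le_mul_of_nonneg_left (by split <;> norm_num) (hmatnn n i k)
  have hann : ∀ n (i : E), (0:ℝ) ≤ ∑' j, matPow T n i j :=
    fun n i => tsum_nonneg fun j => hmatnn n i j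
  have ha0 : ∀ i : E, ∑' j, matPow T 0 i j = 1 := by
    intro i
    have e : ∀ b : E, b ≠ i → matPow T 0 i b = 0 := by
      intro b hb; show (if i = b then (1:ℝ) else 0) = 0; simp [Ne.symm hb]
    rw [tsum_eq_single i e]; show (if i = i then (1:ℝ) else 0) = 1; simp
  have hg0 : ∀ i : E, ∑' j, matPow T 0 i j * V j = V i := by
    intro i
    have e : ∀ b : E, b ≠ i → matPow T 0 i b * V b = 0 := by
      intro b hb
      have : matPow T 0 i b = 0 := by
        show (if i = b then (1:ℝ) else 0) = 0; simp [Ne.symm hb]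
      rw [this, zero_mul]
    rw [tsum_eq_single i e]
    have : matPow T 0 i i = 1 := by show (if i = i then (1:ℝ) else 0) = 1; simp
    rw [this, one_mul]
  have harec : ∀ n (i : E), ∑' j, matPow T (n+1) i j
      = ∑' k, matPow T n i k * (if k = i₀ then (0:ℝ) else 1) := by
    intro n i
    have h := (hstep (matPow T n i) (hmatnn n i) (hmatS n i) (fun _ => (1:ℝ)) 1 zero_le_one
      (fun _ => zero_le_one) (fun _ => le_rfl)).2
    simp only [mul_one] at h
    calc ∑' j, matPow T (n+1) i j = ∑' j, ∑' k, matPow T n i k * T k j := rfl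
      _ = ∑' k, matPow T n i k * ∑' j, T k j := h
      _ = ∑' k, matPow T n i k * (if k = i₀ then (0:ℝ) else 1) :=
          tsum_congr fun k => by rw [hTrs k]
  -- drift for T
  have hTV : ∀ k, ∑' j, T k j * V j ≤ V k - (if k = i₀ then (0:ℝ) else 1) := by
    intro k
    by_cases h : k = i₀
    · subst h
      have e : (fun j => T k j * V j) = fun _ => (0:ℝ) := by
        funext j; simp [hT]
      rw [e, tsum_zero]
      simp [hV0]
    · have e : (fun j => T k j * V j) = fun j => P k j * V j := by
        funext j; simp [hT, h]
      rw [e, if_neg h]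
      exact hdrift k h
  -- g recursion
  have hgrec : ∀ n (i : E), ∑' j, matPow T (n+1) i j * V j
      ≤ (∑' j, matPow T n i j * V j) - ∑' j, matPow T (n+1) i j := by
    intro n i
    have h := (hstep (matPow T n i) (hmatnn n i) (hmatS n i) V M hM0 hVnn hVM).2
    have e1 : ∑' j, matPow T (n+1) i j * V j
        = ∑' k, matPow T n i k * (∑' j, T k j * V j) := by
      calc ∑' j, matPow T (n+1) i j * V j
          = ∑' j, (∑' k, matPow T n i k * T k j) * V j := rfl
        _ = ∑' k, matPow T n i k * (∑' j, T k j * V j) := h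
    have hrw := fun k => hrowW V M hM0 hVnn hVM k
    have hLS : Summable fun k => matPow T n i k * (∑' j, T k j * V j) :=
      Summable.of_nonneg_of_le
        (fun k => mul_nonneg (hmatnn n i k) (hrw k).2.1)
        (fun k => mul_le_mul_of_nonneg_left (hrw k).2.2 (hmatnn n i k))
        ((hmatS n i).mul_right M)
    have hRS : Summable fun k => matPow T n i k * (V k - (if k = i₀ then (0:ℝ) else 1)) := by
      have e : (fun k => matPow T n i k * (V k - (if k = i₀ then (0:ℝ) else 1)))
          = fun k => matPow T n i k * V k - matPow T n i k * (if k = i₀ then (0:ℝ) else 1) := by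
        funext k; ring
      rw [e]
      exact (hVsum n i).sub (hiteS n i)
    have h2 : ∑' k, matPow T n i k * (∑' j, T k j * V j)
        ≤ ∑' k, matPow T n i k * (V k - (if k = i₀ then (0:ℝ) else 1)) :=
      Summable.tsum_le_tsum (fun k => mul_le_mul_of_nonneg_left (hTV k) (hmatnn n i k)) hLS hRS
    have h3 : ∑' k, matPow T n i k * (V k - (if k = i₀ then (0:ℝ) else 1))
        = (∑' j, matPow T n i j * V j) - ∑' j, matPow T (n+1) i j := by
      have e : (fun k => matPow T n i k * (V k - (if k = i₀ then (0:ℝ) else 1)))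
          = fun k => matPow T n i k * V k - matPow T n i k * (if k = i₀ then (0:ℝ) else 1) := by
        funext k; ring
      rw [e, Summable.tsum_sub (hVsum n i) (hiteS n i), harec n i]
    rw [e1]
    linarith [h2, h3.le, h3.ge]
  -- partial sums bounded
  have hgnn : ∀ n (i : E), (0:ℝ) ≤ ∑' j, matPow T n i j * V j :=
    fun n i => tsum_nonneg fun j => mul_nonneg (hmatnn n i j) (hVnn j)
  have hpart : ∀ (i : E) (N : ℕ),
      (∑' j, matPow T N i j * V j) + (∑ n ∈ Finset.range N, ∑' j, matPow T (n+1) i j) ≤ V i := by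
    intro i N
    induction N with
    | zero => simp [hg0 i]
    | succ N ihN =>
      rw [Finset.sum_range_succ]
      have := hgrec N i
      linarith
  have hpart' : ∀ (i : E) (N : ℕ),
      (∑ n ∈ Finset.range N, ∑' j, matPow T (n+1) i j) ≤ V i := by
    intro i N
    have h1 := hpart i N
    have h2 := hgnn N i
    linarith
  have hasum : ∀ i : E, Summable (fun n => ∑' j, matPow T (n+1) i j) :=
    fun i => summable_of_sum_range_le (fun n => hann (n+1) i) (hpart' i)
  have hasum' : ∀ i : E, Summable (fun n => ∑' j, matPow T n i j) :=
    fun i => (summable_nat_add_iff 1).mp (hasum i)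
  have hσle : ∀ i : E, ∑' n, ∑' j, matPow T n i j ≤ 1 + V i := by
    intro i
    rw [Summable.tsum_eq_zero_add (hasum' i), ha0 i]
    have h1 : ∑' n, ∑' j, matPow T (n+1) i j ≤ V i :=
      Summable.tsum_le_of_sum_range_le (hasum i) (hpart' i)
    linarith
  have hσge : ∀ i : E, 1 ≤ ∑' n, ∑' j, matPow T n i j := by
    intro i
    have h1 : ∑' j, matPow T 0 i j ≤ ∑' n, ∑' j, matPow T n i j :=
      Summable.le_tsum (hasum' i) 0 (fun n _ => hann n i)
    rw [ha0 i] at h1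
    exact h1
  -- first conjunct
  have hsummable_nj : ∀ (i j : E), Summable fun n => matPow T n i j := by
    intro i j
    exact Summable.of_nonneg_of_le (fun n => hmatnn n i j)
      (fun n => Summable.le_tsum (hmatS n i) j (fun b _ => hmatnn n i b)) (hasum' i)
  refine ⟨hsummable_nj, ?_⟩
  -- π facts
  have hπS : Summable pi := by
    by_contra h
    rw [tsum_eq_zero_of_not_summable h] at hπtot; norm_num at hπtot
  have hπ1 : ∀ j, pi j ≤ 1 := by
    intro j
    have := Summable.le_tsum hπS j (fun b _ => hπnn b)
    rwa [hπtot] at this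
  have hPVs : ∀ k, Summable (fun j => P k j * V j) := by
    intro k
    exact Summable.of_nonneg_of_le (fun j => mul_nonneg (hPnn k j) (hVnn j))
      (fun j => mul_le_mul_of_nonneg_left (hVM j) (hPnn k j)) ((hProwS k).mul_right M)
  have hPVnn : ∀ k, (0:ℝ) ≤ ∑' j, P k j * V j :=
    fun k => tsum_nonneg fun j => mul_nonneg (hPnn k j) (hVnn j)
  have hPVle : ∀ k, ∑' j, P k j * V j ≤ M := by
    intro k
    calc ∑' j, P k j * V j ≤ ∑' j, P k j * M :=
          Summable.tsum_le_tsum (fun j => mul_le_mul_of_nonneg_left (hVM j) (hPnn k j))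
            (hPVs k) ((hProwS k).mul_right M)
      _ = (∑' j, P k j) * M := tsum_mul_right
      _ = M := by rw [hProw k, one_mul]
  -- invariance + drift ⟹ 1 ≤ pi i₀ * (M + 1)
  have hπi₀ : 1 - pi i₀ ≤ pi i₀ * M := by
    set F : E → E → ℝ := fun i j => pi i * (P i j * V j) with hF
    have hFnn : ∀ i j, 0 ≤ F i j :=
      fun i j => mul_nonneg (hπnn i) (mul_nonneg (hPnn i j) (hVnn j))
    have hslice : ∀ i, Summable (F i) := fun i => (hPVs i).mul_left (pi i)
    have hsliceval : ∀ i, ∑' j, F i j = pi i * (∑' j, P i j * V j) := fun i => tsum_mul_left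
    have hmarg : Summable fun i => ∑' j, F i j := by
      rw [summable_congr hsliceval]
      exact Summable.of_nonneg_of_le
        (fun i => mul_nonneg (hπnn i) (hPVnn i))
        (fun i => mul_le_mul_of_nonneg_left (hPVle i) (hπnn i))
        (hπS.mul_right M)
    obtain ⟨hcolsum, hcomm⟩ := stmt7_fubini F hFnn hslice hmarg
    have hcol : ∀ j, ∑' i, F i j = pi j * V j := by
      intro j
      have e : (fun i => F i j) = fun i => (pi i * P i j) * V j := by
        funext i; simp [hF, mul_assoc]
      rw [e, tsum_mul_right, (hpiinv j).tsum_eq]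
    have hπV : ∑' j, pi j * V j = ∑' i, pi i * (∑' j, P i j * V j) := by
      calc ∑' j, pi j * V j = ∑' j, ∑' i, F i j := tsum_congr fun j => (hcol j).symm
        _ = ∑' i, ∑' j, F i j := hcomm
        _ = ∑' i, pi i * (∑' j, P i j * V j) := tsum_congr hsliceval
    -- pointwise bound
    have hpw : ∀ i, pi i * (∑' j, P i j * V j)
        ≤ (pi i * V i - pi i) + (if i = i₀ then pi i₀ * ((∑' j, P i₀ j * V j) + 1) else 0) := by
      intro i
      by_cases h : i = i₀
      · subst h
        rw [if_pos rfl, hV0]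
        ring_nf
        nlinarith [hπnn i, hPVnn i]
      · rw [if_neg h, add_zero]
        have h1 : pi i * (∑' j, P i j * V j) ≤ pi i * (V i - 1) :=
          mul_le_mul_of_nonneg_left (hdrift i h) (hπnn i)
        nlinarith [h1]
    have hπVs : Summable fun i => pi i * V i :=
      Summable.of_nonneg_of_le (fun i => mul_nonneg (hπnn i) (hVnn i))
        (fun i => mul_le_mul_of_nonneg_left (hVM i) (hπnn i)) (hπS.mul_right M)
    have hiteπ : Summable (fun i => if i = i₀ then pi i₀ * ((∑' j, P i₀ j * V j) + 1) else 0) := by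
      apply summable_of_ne_finset_zero (s := {i₀})
      intro b hb
      rw [if_neg (by simpa using hb)]
    have hRS2 : Summable fun i =>
        (pi i * V i - pi i) + (if i = i₀ then pi i₀ * ((∑' j, P i₀ j * V j) + 1) else 0) :=
      (hπVs.sub hπS).add hiteπ
    have hLS2 : Summable fun i => pi i * (∑' j, P i j * V j) := by
      rw [← summable_congr hsliceval]
      exact hmarg
    have hsum2 : ∑' i, pi i * (∑' j, P i j * V j)
        ≤ ∑' i, ((pi i * V i - pi i) + (if i = i₀ then pi i₀ * ((∑' j, P i₀ j * V j) + 1) else 0)) :=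
      Summable.tsum_le_tsum hpw hLS2 hRS2
    have hval : ∑' i, ((pi i * V i - pi i) + (if i = i₀ then pi i₀ * ((∑' j, P i₀ j * V j) + 1) else 0))
        = (∑' i, pi i * V i) - 1 + pi i₀ * ((∑' j, P i₀ j * V j) + 1) := by
      have hz2 : ∀ b : E, b ≠ i₀ →
          (if b = i₀ then pi i₀ * ((∑' j, P i₀ j * V j) + 1) else 0) = 0 :=
        fun b hb => if_neg hb
      rw [Summable.tsum_add (hπVs.sub hπS) hiteπ, Summable.tsum_sub hπVs hπS, hπtot,
        tsum_eq_single i₀ hz2, if_pos rfl]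
    rw [hval] at hsum2
    rw [hπV] at hsum2
    have h9 : 1 ≤ pi i₀ * ((∑' j, P i₀ j * V j) + 1) := by linarith
    have h10 : pi i₀ * ((∑' j, P i₀ j * V j) + 1) ≤ pi i₀ * (M + 1) :=
      mul_le_mul_of_nonneg_left (by linarith [hPVle i₀]) (hπnn i₀)
    nlinarith [h9, h10]
  -- main bound
  apply iSup_le
  intro i
  -- Fubini for S
  obtain ⟨hS_colsum, hS_eq⟩ := stmt7_fubini (fun n j => matPow T n i j)
    (fun n j => hmatnn n i j) (fun n => hmatS n i) (hasum' i)
  set σ : ℝ := ∑' n, ∑' j, matPow T n i j with hσ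
  have hσnn : (0:ℝ) ≤ σ := le_trans zero_le_one (hσge i)
  -- S i i₀ = 1
  have hSi₀ : ∑' n, matPow T n i i₀ = 1 := by
    have hd : ∀ n, matPow T n i i₀
        = (∑' j, matPow T n i j) - ∑' j, matPow T (n+1) i j := by
      intro n
      rw [harec n i]
      have e : (fun k => matPow T n i k * (if k = i₀ then (0:ℝ) else 1))
          = fun k => matPow T n i k - matPow T n i k * (if k = i₀ then (1:ℝ) else 0) := by
        funext k; by_cases h : k = i₀ <;> simp [h]
      have hitS' : Summable (fun k => matPow T n i k * (if k = i₀ then (1:ℝ) else 0)) := by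
        apply summable_of_ne_finset_zero (s := {i₀})
        intro b hb
        rw [if_neg (by simpa using hb), mul_zero]
      have hz : ∀ b : E, b ≠ i₀ → matPow T n i b * (if b = i₀ then (1:ℝ) else 0) = 0 :=
        fun b hb => by rw [if_neg hb, mul_zero]
      rw [e, Summable.tsum_sub (hmatS n i) hitS', tsum_eq_single i₀ hz, if_pos rfl, mul_one]
      ring
    have hps : ∀ N : ℕ, ∑ n ∈ Finset.range N, matPow T n i i₀
        = 1 - ∑' j, matPow T N i j := by
      intro N
      calc ∑ n ∈ Finset.range N, matPow T n i i₀
          = ∑ n ∈ Finset.range N,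
            ((∑' j, matPow T n i j) - ∑' j, matPow T (n+1) i j) :=
            Finset.sum_congr rfl fun n _ => hd n
        _ = (∑' j, matPow T 0 i j) - ∑' j, matPow T N i j :=
            Finset.sum_range_sub' (fun n => ∑' j, matPow T n i j) N
        _ = 1 - ∑' j, matPow T N i j := by rw [ha0 i]
    have hlim1 : Filter.Tendsto (fun N => ∑ n ∈ Finset.range N, matPow T n i i₀)
        Filter.atTop (nhds (∑' n, matPow T n i i₀)) :=
      (hsummable_nj i i₀).hasSum.tendsto_sum_nat
    have hlim2 : Filter.Tendsto (fun N => ∑ n ∈ Finset.range N, matPow T n i i₀)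
        Filter.atTop (nhds 1) := by
      have h0 : Filter.Tendsto (fun N => ∑' j, matPow T N i j) Filter.atTop (nhds 0) :=
        (hasum' i).tendsto_atTop_zero
      have : Filter.Tendsto (fun N => 1 - ∑' j, matPow T N i j) Filter.atTop (nhds (1 - 0)) :=
        Filter.Tendsto.const_sub 1 h0
      rw [sub_zero] at this
      exact Filter.Tendsto.congr (fun N => (hps N).symm) this
    exact tendsto_nhds_unique hlim1 hlim2
  -- rewrite goal
  rw [hS_eq]
  -- the row function
  set f : E → ℝ := fun j => (∑' n, matPow T n i j) - σ * pi j with hf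
  have hSnn : ∀ j, (0:ℝ) ≤ ∑' n, matPow T n i j :=
    fun j => tsum_nonneg fun n => hmatnn n i j
  have hfs : Summable f := hS_colsum.sub (hπS.mul_left σ)
  have habs : Summable fun j => |f j| := hfs.abs
  have hSsum_eq : ∑' j, ∑' n, matPow T n i j = σ := hS_eq
  have htot0 : ∑' j, f j = 0 := by
    rw [hf]
    rw [Summable.tsum_sub hS_colsum (hπS.mul_left σ), tsum_mul_left, hπtot, hSsum_eq]
    ring
  set m : E → ℝ := fun j => min (σ * pi j) (∑' n, matPow T n i j) with hm
  have hmnn : ∀ j, 0 ≤ m j :=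
    fun j => le_min (mul_nonneg hσnn (hπnn j)) (hSnn j)
  have hms : Summable m :=
    Summable.of_nonneg_of_le hmnn (fun j => min_le_left _ _) (hπS.mul_left σ)
  have hid : ∀ j, |f j| = f j + 2 * (σ * pi j - m j) := by
    intro j
    rcases le_total (σ * pi j) (∑' n, matPow T n i j) with h | h
    · rw [hm, hf]
      simp only []
      rw [min_eq_left h, abs_of_nonneg (by linarith)]
      ring
    · rw [hm, hf]
      simp only []
      rw [min_eq_right h, abs_of_nonpos (by linarith)]
      ring
  have hsum_abs : ∑' j, |f j| = 2 * (σ - ∑' j, m j) := by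
    have h2s : Summable fun j => 2 * (σ * pi j - m j) :=
      ((hπS.mul_left σ).sub hms).mul_left 2
    calc ∑' j, |f j| = ∑' j, (f j + 2 * (σ * pi j - m j)) := tsum_congr hid
      _ = (∑' j, f j) + ∑' j, 2 * (σ * pi j - m j) := Summable.tsum_add hfs h2s
      _ = 0 + 2 * ((∑' j, σ * pi j) - ∑' j, m j) := by
          rw [htot0, tsum_mul_left, Summable.tsum_sub (hπS.mul_left σ) hms]
      _ = 2 * (σ - ∑' j, m j) := by rw [tsum_mul_left, hπtot, mul_one, zero_add]
  have hmlb : min (σ * pi i₀) 1 ≤ ∑' j, m j := by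
    have h1 : m i₀ ≤ ∑' j, m j := Summable.le_tsum hms i₀ (fun b _ => hmnn b)
    have h2 : m i₀ = min (σ * pi i₀) 1 := by rw [hm]; simp only []; rw [hSi₀]
    rwa [h2] at h1
  -- key real bound
  have hkey : σ - min (σ * pi i₀) 1 ≤ M ^ 2 := by
    have hσle' : σ ≤ 1 + V i := hσle i
    rcases le_or_gt 1 (σ * pi i₀) with h | h
    · rw [min_eq_right h]
      by_cases hi : i = i₀
      · subst hi
        rw [hV0] at hσle'
        nlinarith
      · have h1 : 1 ≤ V i := hVge1 i hi
        have h2 : V i ≤ M := hVM i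
        nlinarith
    · rw [min_eq_left h.le]
      have hb : σ - σ * pi i₀ ≤ M := by
        have h1 : σ * (1 - pi i₀) ≤ σ * (pi i₀ * M) := by
          apply mul_le_mul_of_nonneg_left _ hσnn
          linarith [hπi₀]
        have h2 : σ * (pi i₀ * M) = (σ * pi i₀) * M := by ring
        have h3 : (σ * pi i₀) * M ≤ 1 * M :=
          mul_le_mul_of_nonneg_right h.le hM0
        nlinarith
      by_cases hi : i = i₀
      · by_cases hex : ∃ k : E, k ≠ i₀
        · obtain ⟨k, hk⟩ := hex
          have h1 : 1 ≤ V k := hVge1 k hk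
          have h2 : V k ≤ M := hVM k
          nlinarith
        · push_neg at hex
          have hπ10 : pi i₀ = 1 := by
            rw [← hπtot]
            exact (tsum_eq_single i₀ (fun b hb => absurd (hex b) hb)).symm
          rw [hπ10, mul_one] at h ⊢
          subst hi
          rw [hV0] at hσle'
          nlinarith
      · have h1 : 1 ≤ V i := hVge1 i hi
        have h2 : V i ≤ M := hVM i
        nlinarith
  -- conclude
  have hfinal : ∑' j, |f j| ≤ 2 * M ^ 2 := by
    rw [hsum_abs]
    have : σ - ∑' j, m j ≤ σ - min (σ * pi i₀) 1 := by linarith [hmlb]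
    linarith [hkey]
  calc ∑' j, ENNReal.ofReal |(∑' n, matPow T n i j) - σ * pi j|
      = ENNReal.ofReal (∑' j, |f j|) :=
        (ENNReal.ofReal_tsum_of_nonneg (fun j => abs_nonneg _) habs).symm
    _ ≤ ENNReal.ofReal (2 * M ^ 2) := ENNReal.ofReal_le_ofReal hfinal

end
end
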